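/- arXiv:2306.12061 — 11 statements merged into one kernel-verified Lean document; each statement's English description precedes it below -/
import Mathlib

section
/- Every solution of the difference equation x_{n+4} = max{x_{n+3}, x_{n+2}, x_{n+1}, 0} - x_n with real initial conditions is bounded; in fact |x_n| ≤ max{|x_j| : 1 ≤ j ≤ 12} for all n ≥ 1. -/
/-!
Since `x (n + 4) + x n` is the maximum of `x (n + 3)`, `x (n + 2)`, `x (n + 1)` and `0`, we have
`-x n ≤ x (n + 4)`, so lower bounds follow from upper bounds, and `x (n + 4) ≤ K` as soon as
`x (n + 1), x (n + 2), x (n + 3), 0 ≤ K + x n`. An upper bound `M` on eleven consecutive terms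
therefore passes to the next one: applied with `K = M` to `x 11`, this needs
`x 8, x 9, x 10 ≤ M + x 7`, which is clear when `x 7 ≥ 0` and follows from a chain of the same
estimates through `x 0, …, x 10` when `x 7 < 0`.
-/

namespace MaxRecurrence

def IsSolution (x : ℕ → ℝ) : Prop :=
  ∀ n, x (n + 4) = max (max (max (x (n + 3)) (x (n + 2))) (x (n + 1))) 0 - x n

namespace IsSolution

variable {x : ℕ → ℝ}

theorem shift (hx : IsSolution x) (m : ℕ) : IsSolution fun n => x (m + n) := fun n => by
  simpa only [add_assoc] using hx (m + n)

theorem le_add (hx : IsSolution x) (n : ℕ) :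
    x (n + 3) ≤ x (n + 4) + x n ∧ x (n + 2) ≤ x (n + 4) + x n ∧
      x (n + 1) ≤ x (n + 4) + x n ∧ 0 ≤ x (n + 4) + x n := by
  rw [hx n, sub_add_cancel]
  simp only [le_sup_iff, le_refl, true_or, or_true, and_self]

theorem le_of_le_add (hx : IsSolution x) {n : ℕ} {K : ℝ} (h3 : x (n + 3) ≤ K + x n)
    (h2 : x (n + 2) ≤ K + x n) (h1 : x (n + 1) ≤ K + x n) (h0 : 0 ≤ K + x n) :
    x (n + 4) ≤ K := by
  rw [hx n, sub_le_iff_le_add]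
  exact max_le (max_le (max_le h3 h2) h1) h0

theorem le_add_seven_of_neg (hx : IsSolution x) {M : ℝ} (h : ∀ k ≤ 2, x k ≤ M)
    (h7 : x 7 < 0) : x 8 ≤ M + x 7 ∧ x 9 ≤ M + x 7 ∧ x 10 ≤ M + x 7 := by
  have hx0 := h 0 (by norm_num)
  have hx1 := h 1 (by norm_num)
  have hx2 := h 2 (by norm_num)
  obtain ⟨s43, s42, s41, -⟩ := hx.le_add 0
  obtain ⟨-, s53, s52, -⟩ := hx.le_add 1
  obtain ⟨-, -, s63, -⟩ := hx.le_add 2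
  obtain ⟨s76, s75, s74, s70⟩ := hx.le_add 3
  have h6 : x 6 ≤ x 3 - x 2 :=
    hx.le_of_le_add (n := 2) (by linarith) (by linarith) (by linarith) (by linarith)
  have h8 : x 8 ≤ x 3 + x 7 - x 4 :=
    hx.le_of_le_add (n := 4) (by linarith) (by linarith) (by linarith) (by linarith)
  have h9 : x 9 ≤ M + x 7 :=
    hx.le_of_le_add (n := 5) (by linarith) (by linarith) (by linarith) (by linarith)
  have h9' : x 9 ≤ M + x 7 + x 6 :=
    hx.le_of_le_add (n := 5) (by linarith) (by linarith) (by linarith) (by linarith)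
  have h10 : x 10 ≤ M + x 7 :=
    hx.le_of_le_add (n := 6) (by linarith) (by linarith) (by linarith) (by linarith)
  exact ⟨by linarith, h9, h10⟩

theorem le_eleven_of_forall_le (hx : IsSolution x) {M : ℝ} (h : ∀ k ≤ 10, x k ≤ M) :
    x 11 ≤ M := by
  have hx3 : 0 ≤ M + x 7 := by linarith [(hx.le_add 3).2.2.2, h 3 (by norm_num)]
  obtain ⟨h8, h9, h10⟩ : x 8 ≤ M + x 7 ∧ x 9 ≤ M + x 7 ∧ x 10 ≤ M + x 7 := by
    rcases lt_or_ge (x 7) 0 with h7 | h7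
    · exact hx.le_add_seven_of_neg (fun k hk => h k (by omega)) h7
    · exact ⟨by linarith [h 8 (by norm_num)], by linarith [h 9 (by norm_num)],
        by linarith [h 10 (by norm_num)]⟩
  exact hx.le_of_le_add h10 h9 h8 hx3

theorem le_of_forall_le_ten (hx : IsSolution x) {M : ℝ} (h : ∀ k ≤ 10, x k ≤ M) (n : ℕ) :
    x n ≤ M := by
  induction n using Nat.strong_induction_on with
  | _ n ih =>
    rcases le_or_gt n 10 with hn | hn
    · exact h n hn
    · obtain ⟨m, rfl⟩ : ∃ m, n = m + 11 := ⟨n - 11, by omega⟩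
      exact (hx.shift m).le_eleven_of_forall_le fun k hk => ih (m + k) (by omega)

theorem abs_le_of_forall_abs_le_ten (hx : IsSolution x) {M : ℝ} (h : ∀ k ≤ 10, |x k| ≤ M)
    (n : ℕ) : |x n| ≤ M := by
  have hle := hx.le_of_forall_le_ten (fun k hk => (abs_le.mp (h k hk)).2)
  rcases lt_or_ge n 4 with hn | hn
  · exact h n (by omega)
  · obtain ⟨m, rfl⟩ : ∃ m, n = m + 4 := ⟨n - 4, by omega⟩
    exact abs_le.mpr ⟨by linarith [(hx.le_add m).2.2.2, hle m], hle (m + 4)⟩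

end IsSolution

end MaxRecurrence

theorem stmt_0 (x : ℕ → ℝ)
    (hrec : ∀ n ≥ 1, x (n + 4) = max (max (max (x (n + 3)) (x (n + 2))) (x (n + 1))) 0 - x n) :
    ∀ n ≥ 1, |x n| ≤ (Finset.Icc 1 12).sup' ⟨1, by simp⟩ (fun j => |x j|) := by
  have hsol : MaxRecurrence.IsSolution fun n => x (n + 1) := fun n => hrec (n + 1) (by omega)
  rintro n hn
  obtain ⟨m, rfl⟩ : ∃ m, n = m + 1 := ⟨n - 1, by omega⟩
  refine hsol.abs_le_of_forall_abs_le_ten (fun k hk => ?_) m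
  exact Finset.le_sup' (fun j => |x j|) (Finset.mem_Icc.mpr ⟨by omega, by omega⟩)
end

section
/- For any solution (x_n) of x_{n+4} = max{x_{n+3}, x_{n+2}, x_{n+1}, 0} - x_n, if x_j < 0 and |x_j| = max{|x_n| : n ≥ 1}, then x_{j+4} = |x_j|; consequently the supremum of |x_n| over n ≥ 1 is attained at a non-negative term of the sequence. -/
theorem stmt_1 (x : ℕ → ℝ) (j : ℕ) (hj : 1 ≤ j)
    (hrec : ∀ n ≥ 1, x (n + 4) = max (max (max (x (n + 3)) (x (n + 2))) (x (n + 1))) 0 - x n)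
    (hneg : x j < 0) (hmax : ∀ n ≥ 1, |x n| ≤ |x j|) :
    x (j + 4) = |x j| ∧ ∃ k ≥ 1, 0 ≤ x k ∧ ∀ n ≥ 1, |x n| ≤ x k := by
  have hlower : |x j| ≤ x (j + 4) := by
    rw [hrec j hj, abs_of_neg hneg]
    linarith [le_max_right (max (max (x (j + 3)) (x (j + 2))) (x (j + 1))) 0]
  have hupper : x (j + 4) ≤ |x j| := (le_abs_self _).trans (hmax (j + 4) (by omega))
  have hx4 : x (j + 4) = |x j| := le_antisymm hupper hlower
  exact ⟨hx4, j + 4, by omega, hx4 ▸ abs_nonneg _, fun n hn => hx4 ▸ hmax n hn⟩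
end

section
/- If the initial conditions satisfy x_1 ≥ x_2 ≥ x_3 ≥ x_4 (monotone initial conditions) for the equation x_{n+4} = max{x_{n+3}, x_{n+2}, x_{n+1}, 0} - x_n, then the resulting solution is periodic with period 11. -/
/-!
With antitone initial data x₁ ≥ x₂ ≥ x₃ ≥ x₄, the position of the sign change among x₁, …, x₄
decides every maximum occurring in the first eleven steps. In each of the five cases the terms
x₅, …, x₁₅ are therefore explicit linear combinations of x₁, …, x₄, and x₁₂, …, x₁₅ come back to
x₁, …, x₄. A fourth-order recurrence whose initial window recurs after p steps is p-periodic.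
-/

theorem periodic_of_window_eq {α : Type*} (f : α → α → α → α → α) {x : ℕ → α} {p : ℕ}
    (hrec : ∀ n ≥ 1, x (n + 4) = f (x (n + 3)) (x (n + 2)) (x (n + 1)) (x n))
    (hwin : ∀ k, 1 ≤ k → k ≤ 4 → x (k + p) = x k) :
    ∀ n ≥ 1, x (n + p) = x n := by
  intro n hn
  induction n using Nat.strong_induction_on with
  | _ n ih =>
    rcases le_or_gt n 4 with hn4 | hn4
    · exact hwin n hn hn4
    · obtain ⟨m, rfl⟩ : ∃ m, n = m + 4 := ⟨n - 4, by omega⟩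
      have hm : 1 ≤ m := by omega
      calc x (m + 4 + p) = x (m + p + 4) := by rw [Nat.add_right_comm]
        _ = f (x (m + 3 + p)) (x (m + 2 + p)) (x (m + 1 + p)) (x (m + p)) := by
          rw [hrec _ (by omega)]; simp only [Nat.add_right_comm]
        _ = f (x (m + 3)) (x (m + 2)) (x (m + 1)) (x m) := by
          rw [ih (m + 3) (by omega) (by omega), ih (m + 2) (by omega) (by omega),
            ih (m + 1) (by omega) (by omega), ih m (by omega) hm]
        _ = x (m + 4) := (hrec m hm).symm

def MaxRecurrence (x : ℕ → ℝ) : Prop :=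
  ∀ n ≥ 1, x (n + 4) = max (max (max (x (n + 3)) (x (n + 2))) (x (n + 1))) 0 - x n

namespace MaxRecurrence

variable {x : ℕ → ℝ}

theorem apply_add_five (hx : MaxRecurrence x) (n : ℕ) :
    x (n + 5) = max (max (max (x (n + 4)) (x (n + 3))) (x (n + 2))) 0 - x (n + 1) :=
  hx (n + 1) (Nat.le_add_left 1 n)

theorem window_return_of_fourth_nonneg (hx : MaxRecurrence x) (h12 : x 2 ≤ x 1)
    (h23 : x 3 ≤ x 2) (h34 : x 4 ≤ x 3) (h4 : 0 ≤ x 4) :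
    x 12 = x 1 ∧ x 13 = x 2 ∧ x 14 = x 3 ∧ x 15 = x 4 := by
  have e5 : x 5 = x 2 - x 1 := by rw [hx.apply_add_five 0]; grind
  have e6 : x 6 = x 3 - x 2 := by rw [hx.apply_add_five 1]; grind
  have e7 : x 7 = x 4 - x 3 := by rw [hx.apply_add_five 2]; grind
  have e8 : x 8 = -x 4 := by rw [hx.apply_add_five 3]; grind
  have e9 : x 9 = x 1 - x 2 := by rw [hx.apply_add_five 4]; grind
  have e10 : x 10 = x 1 - x 3 := by rw [hx.apply_add_five 5]; grind
  have e11 : x 11 = x 1 - x 4 := by rw [hx.apply_add_five 6]; grind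
  have e12 : x 12 = x 1 := by rw [hx.apply_add_five 7]; grind
  have e13 : x 13 = x 2 := by rw [hx.apply_add_five 8]; grind
  have e14 : x 14 = x 3 := by rw [hx.apply_add_five 9]; grind
  have e15 : x 15 = x 4 := by rw [hx.apply_add_five 10]; grind
  exact ⟨e12, e13, e14, e15⟩

theorem window_return_of_fourth_neg_of_third_nonneg (hx : MaxRecurrence x) (h12 : x 2 ≤ x 1)
    (h23 : x 3 ≤ x 2) (h4 : x 4 < 0) (h3 : 0 ≤ x 3) :
    x 12 = x 1 ∧ x 13 = x 2 ∧ x 14 = x 3 ∧ x 15 = x 4 := by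
  have e5 : x 5 = x 2 - x 1 := by rw [hx.apply_add_five 0]; grind
  have e6 : x 6 = x 3 - x 2 := by rw [hx.apply_add_five 1]; grind
  have e7 : x 7 = -x 3 := by rw [hx.apply_add_five 2]; grind
  have e8 : x 8 = -x 4 := by rw [hx.apply_add_five 3]; grind
  have e9 : x 9 = x 1 - x 2 - x 4 := by rw [hx.apply_add_five 4]; grind
  have e10 : x 10 = x 1 - x 3 - x 4 := by rw [hx.apply_add_five 5]; grind
  have e11 : x 11 = x 1 - x 4 := by rw [hx.apply_add_five 6]; grind
  have e12 : x 12 = x 1 := by rw [hx.apply_add_five 7]; grind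
  have e13 : x 13 = x 2 := by rw [hx.apply_add_five 8]; grind
  have e14 : x 14 = x 3 := by rw [hx.apply_add_five 9]; grind
  have e15 : x 15 = x 4 := by rw [hx.apply_add_five 10]; grind
  exact ⟨e12, e13, e14, e15⟩

theorem window_return_of_third_neg_of_second_nonneg (hx : MaxRecurrence x) (h12 : x 2 ≤ x 1)
    (h34 : x 4 ≤ x 3) (h3 : x 3 < 0) (h2 : 0 ≤ x 2) :
    x 12 = x 1 ∧ x 13 = x 2 ∧ x 14 = x 3 ∧ x 15 = x 4 := by
  have e5 : x 5 = x 2 - x 1 := by rw [hx.apply_add_five 0]; grind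
  have e6 : x 6 = -x 2 := by rw [hx.apply_add_five 1]; grind
  have e7 : x 7 = -x 3 := by rw [hx.apply_add_five 2]; grind
  have e8 : x 8 = -x 3 - x 4 := by rw [hx.apply_add_five 3]; grind
  have e9 : x 9 = x 1 - x 2 - x 3 - x 4 := by rw [hx.apply_add_five 4]; grind
  have e10 : x 10 = x 1 - x 3 - x 4 := by rw [hx.apply_add_five 5]; grind
  have e11 : x 11 = x 1 - x 4 := by rw [hx.apply_add_five 6]; grind
  have e12 : x 12 = x 1 := by rw [hx.apply_add_five 7]; grind
  have e13 : x 13 = x 2 := by rw [hx.apply_add_five 8]; grind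
  have e14 : x 14 = x 3 := by rw [hx.apply_add_five 9]; grind
  have e15 : x 15 = x 4 := by rw [hx.apply_add_five 10]; grind
  exact ⟨e12, e13, e14, e15⟩

theorem window_return_of_second_neg_of_first_nonneg (hx : MaxRecurrence x) (h23 : x 3 ≤ x 2)
    (h34 : x 4 ≤ x 3) (h2 : x 2 < 0) (h1 : 0 ≤ x 1) :
    x 12 = x 1 ∧ x 13 = x 2 ∧ x 14 = x 3 ∧ x 15 = x 4 := by
  have e5 : x 5 = -x 1 := by rw [hx.apply_add_five 0]; grind
  have e6 : x 6 = -x 2 := by rw [hx.apply_add_five 1]; grind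
  have e7 : x 7 = -x 2 - x 3 := by rw [hx.apply_add_five 2]; grind
  have e8 : x 8 = -x 2 - x 3 - x 4 := by rw [hx.apply_add_five 3]; grind
  have e9 : x 9 = x 1 - x 2 - x 3 - x 4 := by rw [hx.apply_add_five 4]; grind
  have e10 : x 10 = x 1 - x 3 - x 4 := by rw [hx.apply_add_five 5]; grind
  have e11 : x 11 = x 1 - x 4 := by rw [hx.apply_add_five 6]; grind
  have e12 : x 12 = x 1 := by rw [hx.apply_add_five 7]; grind
  have e13 : x 13 = x 2 := by rw [hx.apply_add_five 8]; grind
  have e14 : x 14 = x 3 := by rw [hx.apply_add_five 9]; grind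
  have e15 : x 15 = x 4 := by rw [hx.apply_add_five 10]; grind
  exact ⟨e12, e13, e14, e15⟩

theorem window_return_of_first_neg (hx : MaxRecurrence x) (h12 : x 2 ≤ x 1) (h23 : x 3 ≤ x 2)
    (h34 : x 4 ≤ x 3) (h1 : x 1 < 0) :
    x 12 = x 1 ∧ x 13 = x 2 ∧ x 14 = x 3 ∧ x 15 = x 4 := by
  have e5 : x 5 = -x 1 := by rw [hx.apply_add_five 0]; grind
  have e6 : x 6 = -x 1 - x 2 := by rw [hx.apply_add_five 1]; grind
  have e7 : x 7 = -x 1 - x 2 - x 3 := by rw [hx.apply_add_five 2]; grind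
  have e8 : x 8 = -x 1 - x 2 - x 3 - x 4 := by rw [hx.apply_add_five 3]; grind
  have e9 : x 9 = -x 2 - x 3 - x 4 := by rw [hx.apply_add_five 4]; grind
  have e10 : x 10 = -x 3 - x 4 := by rw [hx.apply_add_five 5]; grind
  have e11 : x 11 = -x 4 := by rw [hx.apply_add_five 6]; grind
  have e12 : x 12 = x 1 := by rw [hx.apply_add_five 7]; grind
  have e13 : x 13 = x 2 := by rw [hx.apply_add_five 8]; grind
  have e14 : x 14 = x 3 := by rw [hx.apply_add_five 9]; grind
  have e15 : x 15 = x 4 := by rw [hx.apply_add_five 10]; grind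
  exact ⟨e12, e13, e14, e15⟩

theorem window_return_of_antitone (hx : MaxRecurrence x) (h12 : x 2 ≤ x 1) (h23 : x 3 ≤ x 2)
    (h34 : x 4 ≤ x 3) :
    x 12 = x 1 ∧ x 13 = x 2 ∧ x 14 = x 3 ∧ x 15 = x 4 := by
  rcases le_or_gt 0 (x 4) with h4 | h4
  · exact hx.window_return_of_fourth_nonneg h12 h23 h34 h4
  rcases le_or_gt 0 (x 3) with h3 | h3
  · exact hx.window_return_of_fourth_neg_of_third_nonneg h12 h23 h4 h3
  rcases le_or_gt 0 (x 2) with h2 | h2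
  · exact hx.window_return_of_third_neg_of_second_nonneg h12 h34 h3 h2
  rcases le_or_gt 0 (x 1) with h1 | h1
  · exact hx.window_return_of_second_neg_of_first_nonneg h23 h34 h2 h1
  · exact hx.window_return_of_first_neg h12 h23 h34 h1

end MaxRecurrence

theorem stmt_2 (x : ℕ → ℝ)
    (hrec : ∀ n ≥ 1, x (n + 4) = max (max (max (x (n + 3)) (x (n + 2))) (x (n + 1))) 0 - x n)
    (hmono : x 1 ≥ x 2 ∧ x 2 ≥ x 3 ∧ x 3 ≥ x 4) :
    ∀ n ≥ 1, x (n + 11) = x n := by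
  obtain ⟨h12, h23, h34⟩ := hmono
  obtain ⟨e12, e13, e14, e15⟩ :=
    MaxRecurrence.window_return_of_antitone hrec h12 h23 h34
  refine periodic_of_window_eq (fun u v w t => max (max (max u v) w) 0 - t) hrec ?_
  intro k hk1 hk4
  interval_cases k <;> assumption
end

section
/- Every solution of the third-order equation y_{n+3} = max{y_{n+2}, y_{n+1}, 0} - y_n with real initial conditions is periodic of period 8 (not necessarily minimal). -/
/-!
With `x n = trop (-y n)` in the min-plus semiring `Tropical (WithTop ℝ)`, the recurrence becomes
Todd's recurrence `x (n + 3) * x n = 1 + x (n + 1) + x (n + 2)`, i.e. `y` is its tropicalization.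
Todd's recurrence is 8-periodic in any commutative semiring whose terms are units: the terms
`x 5, …, x 8` have subtraction-free Laurent expressions in `x 1, x 2, x 3` (each obtained by
multiplying through by a unit and cancelling it), and the expression for `x 9` collapses to `x 1`.
No subtraction is needed, which is what lets the identity pass to the idempotent semiring.
-/

open Tropical

theorem todd_periodic {K : Type*} [CommSemiring K] {x : ℕ → K} (hunit : ∀ n, IsUnit (x n))
    (hrec : ∀ n, x (n + 3) * x n = 1 + x (n + 1) + x (n + 2)) :
    Function.Periodic x 8 := by
  intro n
  have rec4 : x (n + 3) * x n = 1 + x (n + 1) + x (n + 2) := hrec n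
  have rec5 : x (n + 4) * x (n + 1) = 1 + x (n + 2) + x (n + 3) := hrec (n + 1)
  have rec6 : x (n + 5) * x (n + 2) = 1 + x (n + 3) + x (n + 4) := hrec (n + 2)
  have rec7 : x (n + 6) * x (n + 3) = 1 + x (n + 4) + x (n + 5) := hrec (n + 3)
  have rec8 : x (n + 7) * x (n + 4) = 1 + x (n + 5) + x (n + 6) := hrec (n + 4)
  have rec9 : x (n + 8) * x (n + 5) = 1 + x (n + 6) + x (n + 7) := hrec (n + 5)
  set a := x n
  set b := x (n + 1)
  set c := x (n + 2)
  have laurent5 : x (n + 4) * (a * b) = 1 + a + b + c + a * c := by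
    calc x (n + 4) * (a * b) = a * (x (n + 4) * b) := by ring
      _ = a + a * c + x (n + 3) * a := by rw [rec5]; ring
      _ = 1 + a + b + c + a * c := by rw [rec4]; ring
  have laurent6 : x (n + 5) * (a * b * c) = (1 + a + b) * (1 + b + c) := by
    calc x (n + 5) * (a * b * c) = a * b * (x (n + 5) * c) := by ring
      _ = a * b + b * (x (n + 3) * a) + x (n + 4) * (a * b) := by rw [rec6]; ring
      _ = (1 + a + b) * (1 + b + c) := by rw [rec4, laurent5]; ring
  have laurent7 : x (n + 6) * (b * c) = 1 + a + b + c + a * c := by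
    refine ((hunit (n + 3)).mul (hunit n)).mul_left_inj.mp ?_
    calc x (n + 6) * (b * c) * (x (n + 3) * a) = (x (n + 6) * x (n + 3)) * (a * b * c) := by ring
      _ = a * b * c + c * (x (n + 4) * (a * b)) + x (n + 5) * (a * b * c) := by rw [rec7]; ring
      _ = (1 + a + b + c + a * c) * (x (n + 3) * a) := by rw [laurent5, laurent6, rec4]; ring
  have laurent8 : x (n + 7) * c = 1 + a + b := by
    refine ((hunit (n + 4)).mul ((hunit n).mul (hunit (n + 1)))).mul_left_inj.mp ?_
    calc x (n + 7) * c * (x (n + 4) * (a * b)) = (x (n + 7) * x (n + 4)) * (a * b * c) := by ring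
      _ = a * b * c + x (n + 5) * (a * b * c) + a * (x (n + 6) * (b * c)) := by rw [rec8]; ring
      _ = (1 + a + b) * (x (n + 4) * (a * b)) := by rw [laurent5, laurent6, laurent7]; ring
  refine ((hunit (n + 5)).mul (((hunit n).mul (hunit (n + 1))).mul (hunit (n + 2)))).mul_left_inj.mp
    ?_
  calc x (n + 8) * (x (n + 5) * (a * b * c)) = (x (n + 8) * x (n + 5)) * (a * b * c) := by ring
    _ = a * b * c + a * (x (n + 6) * (b * c)) + a * b * (x (n + 7) * c) := by rw [rec9]; ring
    _ = a * (x (n + 5) * (a * b * c)) := by rw [laurent6, laurent7, laurent8]; ring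

theorem isUnit_trop_coe {R : Type*} [AddCommGroup R] (r : R) : IsUnit (trop (r : WithTop R)) :=
  IsUnit.of_mul_eq_one (trop ((-r : R) : WithTop R)) (by
    rw [← trop_add, ← WithTop.coe_add, add_neg_cancel]; rfl)

theorem trop_neg_mul_trop_neg_of_add_eq_max {R : Type*} [AddCommGroup R] [LinearOrder R]
    [IsOrderedAddMonoid R] {p q r s : R} (h : s + p = max (max r q) 0) :
    trop ((-s : R) : WithTop R) * trop ((-p : R) : WithTop R) =
      1 + trop ((-q : R) : WithTop R) + trop ((-r : R) : WithTop R) := by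
  apply untrop_injective
  simp only [untrop_mul, untrop_add, untrop_one, untrop_trop]
  norm_cast
  rw [← neg_add, h, ← min_neg_neg, ← min_neg_neg, neg_zero, min_comm, min_comm (-r),
    min_assoc]

theorem stmt_3 (y : ℕ → ℝ)
    (hrec : ∀ n ≥ 1, y (n + 3) = max (max (y (n + 2)) (y (n + 1))) 0 - y n) :
    ∀ n ≥ 1, y (n + 8) = y n := by
  intro n hn
  obtain ⟨m, rfl⟩ := Nat.exists_eq_add_of_le' hn
  have htodd : Function.Periodic (fun k => trop ((-y (k + 1) : ℝ) : WithTop ℝ)) 8 :=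
    todd_periodic (fun k => isUnit_trop_coe _) fun k =>
      trop_neg_mul_trop_neg_of_add_eq_max (by rw [hrec (k + 1) (by omega)]; ring)
  simpa using htodd m
end

section
/- Given the map F(x,y,z,w) = (y, z, w, max{0,y,z,w} - x) on ℝ⁴, the function V₁(x,y,z,w) = max{0,x,y,z,w} + max{0,-x} + max{0,-y} + max{0,-z} + max{0,-w} is a first integral of F, i.e. V₁(F(p)) = V₁(p) for all p ∈ ℝ⁴. -/
noncomputable def F : ℝ × ℝ × ℝ × ℝ → ℝ × ℝ × ℝ × ℝ :=
  fun p => (p.2.1, p.2.2.1, p.2.2.2, max (max (max 0 p.2.1) p.2.2.1) p.2.2.2 - p.1)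

noncomputable def V1 : ℝ × ℝ × ℝ × ℝ → ℝ :=
  fun p => max (max (max (max 0 p.1) p.2.1) p.2.2.1) p.2.2.2 +
    max 0 (-p.1) + max 0 (-p.2.1) + max 0 (-p.2.2.1) + max 0 (-p.2.2.2)

/-! Write `m = max {0, y, z, w}`. Then `V₁ = max m x + max 0 (-x) + (terms in y, z, w)`, and `F`
shifts `y, z, w` one slot to the left while replacing `x` by `m - x`. So it suffices that
`max m x + max 0 (-x)` is unchanged under `x ↦ m - x`, and indeed both
`max m x + max 0 (-x)` and `max m (m - x) + max 0 (x - m)` equal `m + max 0 (x - m) + max 0 (-x)`. -/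

section

variable {α : Type*} [AddCommGroup α] [LinearOrder α] [IsOrderedAddMonoid α]

theorem max_self_add_max_zero_sub (m x : α) : max m x = m + max 0 (x - m) := by
  rw [← max_add_add_left, add_zero, add_sub_cancel]

theorem max_self_sub_add_max_zero_neg_sub (m x : α) :
    max m (m - x) + max 0 (-(m - x)) = max m x + max 0 (-x) := by
  have hleft : max m (m - x) = m + max 0 (-x) := by
    rw [← max_add_add_left, add_zero, ← sub_eq_add_neg]
  rw [hleft, neg_sub, max_self_add_max_zero_sub m x]
  abel

end

theorem stmt_5 : ∀ p : ℝ × ℝ × ℝ × ℝ, V1 (F p) = V1 p := by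
  rintro ⟨x, y, z, w⟩
  set m := max (max (max 0 y) z) w
  have hmax : max (max (max (max 0 x) y) z) w = max m x := by
    simp only [m, max_comm, max_left_comm]
  have hkey := max_self_sub_add_max_zero_neg_sub m x
  simp only [V1, F, hmax]
  linarith
end

section
/- Given the map F(x,y,z,w) = (y, z, w, max{0,y,z,w} - x) on ℝ⁴, the function V₂(x,y,z,w) = max{0, x, y, z, w, x+w} + max{0, x, y} + max{0, y, z} + max{0, z, w} - x - y - z - w is a first integral of F, i.e. V₂(F(p)) = V₂(p) for all p ∈ ℝ⁴. -/
noncomputable def V2 : ℝ × ℝ × ℝ × ℝ → ℝ :=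
  fun p => max (max (max (max (max 0 p.1) p.2.1) p.2.2.1) p.2.2.2) (p.1 + p.2.2.2) +
    max (max 0 p.1) p.2.1 + max (max 0 p.2.1) p.2.2.1 + max (max 0 p.2.2.1) p.2.2.2 -
    p.1 - p.2.1 - p.2.2.1 - p.2.2.2

section
variable {α : Type*} [AddCommGroup α] [LinearOrder α] [IsOrderedAddMonoid α]

theorem max_self_sub_eq_max_zero_add (m x y : α) :
    max (max m (m - x)) (y + (m - x)) = max (max 0 x) y + (m - x) := by
  rw [← max_add_add_right, ← max_add_add_right, zero_add, add_sub_cancel, max_comm m]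

theorem max_zero_sub_eq_max_sub (m x w : α) :
    max (max 0 w) (m - x) = max (max m x) (x + w) - x := by
  rw [← max_sub_sub_right, ← max_sub_sub_right, sub_self, add_sub_cancel_left]
  ac_rfl

end

theorem stmt_6 : ∀ p : ℝ × ℝ × ℝ × ℝ, V2 (F p) = V2 p := by
  rintro ⟨x, y, z, w⟩
  simp only [F, V2]
  have hM : max (max (max (max 0 x) y) z) w = max (max (max (max 0 y) z) w) x := by ac_rfl
  set M := max (max (max 0 y) z) w
  rw [max_self_sub_eq_max_zero_add, max_zero_sub_eq_max_sub, hM]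
  ring
end

section
/- On the open set U = {(x,y,z,w) ∈ ℝ⁴ : x > w > y > z > 0}, the first integrals V₁ and V₂ of the map F(x,y,z,w) = (y,z,w, max{0,y,z,w} - x) satisfy V₁(x,y,z,w) = x and V₂(x,y,z,w) = x + w - z; in particular V₁ and V₂ are functionally independent on U. -/
def U : Set (ℝ × ℝ × ℝ × ℝ) :=
  {p | p.1 > p.2.2.2 ∧ p.2.2.2 > p.2.1 ∧ p.2.1 > p.2.2.1 ∧ p.2.2.1 > 0}

lemma V1_eq_of_nonneg_of_le {x y z w : ℝ} (hy : 0 ≤ y) (hz : 0 ≤ z) (hw : 0 ≤ w)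
    (hyx : y ≤ x) (hzx : z ≤ x) (hwx : w ≤ x) : V1 (x, y, z, w) = x := by
  have hx : 0 ≤ x := hy.trans hyx
  simp only [V1]
  rw [max_eq_right hx, max_eq_left hyx, max_eq_left hzx, max_eq_left hwx,
    max_eq_left (neg_nonpos.2 hx), max_eq_left (neg_nonpos.2 hy),
    max_eq_left (neg_nonpos.2 hz), max_eq_left (neg_nonpos.2 hw)]
  ring

lemma V2_eq_of_nonneg_of_le {x y z w : ℝ} (hz : 0 ≤ z) (hzy : z ≤ y) (hyx : y ≤ x)
    (hzw : z ≤ w) : V2 (x, y, z, w) = x + w - z := by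
  have hy : 0 ≤ y := hz.trans hzy
  have hx : 0 ≤ x := hy.trans hyx
  have hw : 0 ≤ w := hz.trans hzw
  simp only [V2]
  rw [max_eq_right hx, max_eq_left hyx, max_eq_left (hzy.trans hyx),
    max_eq_right hy, max_eq_left hzy, max_eq_right hz, max_eq_right hzw,
    max_eq_right (max_le (le_add_of_nonneg_right hw) (le_add_of_nonneg_left hx))]
  ring

theorem stmt_7 :
    (∀ p ∈ U, V1 p = p.1 ∧ V2 p = p.1 + p.2.2.2 - p.2.2.1) ∧
    LinearIndependent ℝ ![(![1, 0, 0, 0] : Fin 4 → ℝ), ![1, 0, -1, 1]] := by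
  refine ⟨?_, ?_⟩
  · rintro ⟨x, y, z, w⟩ ⟨hwx, hyw, hzy, hz⟩
    refine ⟨V1_eq_of_nonneg_of_le ?_ ?_ ?_ ?_ ?_ ?_, V2_eq_of_nonneg_of_le ?_ ?_ ?_ ?_⟩ <;>
      linarith
  · rw [LinearIndependent.pair_iff]
    intro s t h
    have ht : t = 0 := by simpa using congrFun h 2
    have hst : s + t = 0 := by simpa using congrFun h 0
    exact ⟨by linarith, ht⟩
end

section
/- Let p, q be positive integers with gcd(p,q) = 1 and q ≥ 2p + 1, and let y₁ ≥ y₄ ≥ y₂ ≥ y₃ ≥ 0 be reals with y₁ = ((q - p)/p)(y₄ - y₃). Then the solution of x_{n+4} = max{x_{n+3},x_{n+2},x_{n+1},0} - x_n with initial conditions (y₁,y₂,y₃,y₄) is periodic of period 10p + 11q. -/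
set_option maxHeartbeats 1000000


private lemma max4_eq {w x y M : ℝ} (hw : w ≤ M) (hx : x ≤ M) (hy : y ≤ M) (h0 : (0:ℝ) ≤ M)
    (he : M = w ∨ M = x ∨ M = y ∨ M = 0) : max (max (max w x) y) 0 = M := by
  have hub : max (max (max w x) y) 0 ≤ M := max_le (max_le (max_le hw hx) hy) h0
  rcases he with h|h|h|h
  · exact le_antisymm hub (by rw [h]; exact le_max_of_le_left (le_max_of_le_left (le_max_left _ _)))
  · exact le_antisymm hub (by rw [h]; exact le_max_of_le_left (le_max_of_le_left (le_max_right _ _)))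
  · exact le_antisymm hub (by rw [h]; exact le_max_of_le_left (le_max_right _ _))
  · exact le_antisymm hub (by rw [h]; exact le_max_right _ _)

private lemma L12 (a : ℕ → ℝ) (P Q K δ e f : ℝ)
    (hrec : ∀ n ≥ 1, a (n + 4) = max (max (max (a (n + 3)) (a (n + 2))) (a (n + 1))) 0 - a n)
    (he0 : 0 ≤ e) (heP : e ≤ P*δ) (hf0 : 0 ≤ f) (hfQ : f ≤ Q*δ - 2*(P*δ))
    (hPd : δ ≤ P*δ) (hQd : 2*(P*δ) + δ ≤ Q*δ)
    (hg1 : 0 ≤ K*δ + e) (hg2 : e ≤ P*δ - K*δ)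
    (n : ℕ) (hn : 1 ≤ n)
    (h0 : a (n) = -P*δ + Q*δ)
    (h1 : a (n+1) = K*δ + e + f)
    (h2 : a (n+2) = f)
    (h3 : a (n+3) = P*δ + f)
    : a (n+11) = -P*δ + Q*δ ∧ a (n+12) = f ∧ a (n+13) = P*δ - K*δ - e + f ∧ a (n+14) = P*δ + f := by
  have h4 : a (n+4) = 2 * P*δ - Q*δ + f := by
    have hr := hrec n hn
    rw [h3, h2, h1, h0] at hr
    rw [hr, max4_eq (by linarith) (by linarith) (by linarith) (by linarith) (Or.inl rfl)]
    ring
  have h5 : a (n+5) = P*δ - K*δ - e := by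
    have hr := hrec (n+1) (by omega)
    simp only [show n+1+4 = n+5 from by omega, show n+1+3 = n+4 from by omega, show n+1+2 = n+3 from by omega, show n+1+1 = n+2 from by omega] at hr
    rw [h4, h3, h2, h1] at hr
    rw [hr, max4_eq (by linarith) (by linarith) (by linarith) (by linarith) (Or.inr (Or.inl rfl))]
    ring
  have h6 : a (n+6) = P*δ := by
    have hr := hrec (n+2) (by omega)
    simp only [show n+2+4 = n+6 from by omega, show n+2+3 = n+5 from by omega, show n+2+2 = n+4 from by omega, show n+2+1 = n+3 from by omega] at hr
    rw [h5, h4, h3, h2] at hr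
    rw [hr, max4_eq (by linarith) (by linarith) (by linarith) (by linarith) (Or.inr (Or.inr (Or.inl rfl)))]
    ring
  have h7 : a (n+7) = -f := by
    have hr := hrec (n+3) (by omega)
    simp only [show n+3+4 = n+7 from by omega, show n+3+3 = n+6 from by omega, show n+3+2 = n+5 from by omega, show n+3+1 = n+4 from by omega] at hr
    rw [h6, h5, h4, h3] at hr
    rw [hr, max4_eq (by linarith) (by linarith) (by linarith) (by linarith) (Or.inl rfl)]
    ring
  have h8 : a (n+8) = -P*δ + Q*δ - f := by
    have hr := hrec (n+4) (by omega)
    simp only [show n+4+4 = n+8 from by omega, show n+4+3 = n+7 from by omega, show n+4+2 = n+6 from by omega, show n+4+1 = n+5 from by omega] at hr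
    rw [h7, h6, h5, h4] at hr
    rw [hr, max4_eq (by linarith) (by linarith) (by linarith) (by linarith) (Or.inr (Or.inl rfl))]
    ring
  have h9 : a (n+9) = -2 * P*δ + Q*δ + K*δ + e - f := by
    have hr := hrec (n+5) (by omega)
    simp only [show n+5+4 = n+9 from by omega, show n+5+3 = n+8 from by omega, show n+5+2 = n+7 from by omega, show n+5+1 = n+6 from by omega] at hr
    rw [h8, h7, h6, h5] at hr
    rw [hr, max4_eq (by linarith) (by linarith) (by linarith) (by linarith) (Or.inl rfl)]
    ring
  have h10 : a (n+10) = -2 * P*δ + Q*δ - f := by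
    have hr := hrec (n+6) (by omega)
    simp only [show n+6+4 = n+10 from by omega, show n+6+3 = n+9 from by omega, show n+6+2 = n+8 from by omega, show n+6+1 = n+7 from by omega] at hr
    rw [h9, h8, h7, h6] at hr
    rw [hr, max4_eq (by linarith) (by linarith) (by linarith) (by linarith) (Or.inr (Or.inl rfl))]
    ring
  have h11 : a (n+11) = -P*δ + Q*δ := by
    have hr := hrec (n+7) (by omega)
    simp only [show n+7+4 = n+11 from by omega, show n+7+3 = n+10 from by omega, show n+7+2 = n+9 from by omega, show n+7+1 = n+8 from by omega] at hr
    rw [h10, h9, h8, h7] at hr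
    rw [hr, max4_eq (by linarith) (by linarith) (by linarith) (by linarith) (Or.inr (Or.inr (Or.inl rfl)))]
    ring
  have h12 : a (n+12) = f := by
    have hr := hrec (n+8) (by omega)
    simp only [show n+8+4 = n+12 from by omega, show n+8+3 = n+11 from by omega, show n+8+2 = n+10 from by omega, show n+8+1 = n+9 from by omega] at hr
    rw [h11, h10, h9, h8] at hr
    rw [hr, max4_eq (by linarith) (by linarith) (by linarith) (by linarith) (Or.inl rfl)]
    ring
  have h13 : a (n+13) = P*δ - K*δ - e + f := by
    have hr := hrec (n+9) (by omega)
    simp only [show n+9+4 = n+13 from by omega, show n+9+3 = n+12 from by omega, show n+9+2 = n+11 from by omega, show n+9+1 = n+10 from by omega] at hr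
    rw [h12, h11, h10, h9] at hr
    rw [hr, max4_eq (by linarith) (by linarith) (by linarith) (by linarith) (Or.inr (Or.inl rfl))]
    ring
  have h14 : a (n+14) = P*δ + f := by
    have hr := hrec (n+10) (by omega)
    simp only [show n+10+4 = n+14 from by omega, show n+10+3 = n+13 from by omega, show n+10+2 = n+12 from by omega, show n+10+1 = n+11 from by omega] at hr
    rw [h13, h12, h11, h10] at hr
    rw [hr, max4_eq (by linarith) (by linarith) (by linarith) (by linarith) (Or.inr (Or.inr (Or.inl rfl)))]
    ring
  exact ⟨h11, h12, h13, h14⟩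

private lemma L11 (a : ℕ → ℝ) (P Q K δ e f : ℝ)
    (hrec : ∀ n ≥ 1, a (n + 4) = max (max (max (a (n + 3)) (a (n + 2))) (a (n + 1))) 0 - a n)
    (he0 : 0 ≤ e) (heP : e ≤ P*δ) (hf0 : 0 ≤ f) (hfQ : f ≤ Q*δ - 2*(P*δ))
    (hPd : δ ≤ P*δ) (hQd : 2*(P*δ) + δ ≤ Q*δ)
    (hg1 : P*δ - K*δ ≤ e) (hg2 : K*δ + e + f ≤ Q*δ - P*δ)
    (n : ℕ) (hn : 1 ≤ n)
    (h0 : a (n) = -P*δ + Q*δ)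
    (h1 : a (n+1) = K*δ + e + f)
    (h2 : a (n+2) = f)
    (h3 : a (n+3) = P*δ + f)
    : a (n+11) = -P*δ + Q*δ ∧ a (n+12) = -P*δ + K*δ + e + f ∧ a (n+13) = f ∧ a (n+14) = P*δ + f := by
  have h4 : a (n+4) = P*δ - Q*δ + K*δ + e + f := by
    have hr := hrec n hn
    rw [h3, h2, h1, h0] at hr
    rw [hr, max4_eq (by linarith) (by linarith) (by linarith) (by linarith) (Or.inr (Or.inr (Or.inl rfl)))]
    ring
  have h5 : a (n+5) = P*δ - K*δ - e := by
    have hr := hrec (n+1) (by omega)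
    simp only [show n+1+4 = n+5 from by omega, show n+1+3 = n+4 from by omega, show n+1+2 = n+3 from by omega, show n+1+1 = n+2 from by omega] at hr
    rw [h4, h3, h2, h1] at hr
    rw [hr, max4_eq (by linarith) (by linarith) (by linarith) (by linarith) (Or.inr (Or.inl rfl))]
    ring
  have h6 : a (n+6) = P*δ := by
    have hr := hrec (n+2) (by omega)
    simp only [show n+2+4 = n+6 from by omega, show n+2+3 = n+5 from by omega, show n+2+2 = n+4 from by omega, show n+2+1 = n+3 from by omega] at hr
    rw [h5, h4, h3, h2] at hr
    rw [hr, max4_eq (by linarith) (by linarith) (by linarith) (by linarith) (Or.inr (Or.inr (Or.inl rfl)))]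
    ring
  have h7 : a (n+7) = -f := by
    have hr := hrec (n+3) (by omega)
    simp only [show n+3+4 = n+7 from by omega, show n+3+3 = n+6 from by omega, show n+3+2 = n+5 from by omega, show n+3+1 = n+4 from by omega] at hr
    rw [h6, h5, h4, h3] at hr
    rw [hr, max4_eq (by linarith) (by linarith) (by linarith) (by linarith) (Or.inl rfl)]
    ring
  have h8 : a (n+8) = Q*δ - K*δ - e - f := by
    have hr := hrec (n+4) (by omega)
    simp only [show n+4+4 = n+8 from by omega, show n+4+3 = n+7 from by omega, show n+4+2 = n+6 from by omega, show n+4+1 = n+5 from by omega] at hr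
    rw [h7, h6, h5, h4] at hr
    rw [hr, max4_eq (by linarith) (by linarith) (by linarith) (by linarith) (Or.inr (Or.inl rfl))]
    ring
  have h9 : a (n+9) = -P*δ + Q*δ - f := by
    have hr := hrec (n+5) (by omega)
    simp only [show n+5+4 = n+9 from by omega, show n+5+3 = n+8 from by omega, show n+5+2 = n+7 from by omega, show n+5+1 = n+6 from by omega] at hr
    rw [h8, h7, h6, h5] at hr
    rw [hr, max4_eq (by linarith) (by linarith) (by linarith) (by linarith) (Or.inl rfl)]
    ring
  have h10 : a (n+10) = -2 * P*δ + Q*δ - f := by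
    have hr := hrec (n+6) (by omega)
    simp only [show n+6+4 = n+10 from by omega, show n+6+3 = n+9 from by omega, show n+6+2 = n+8 from by omega, show n+6+1 = n+7 from by omega] at hr
    rw [h9, h8, h7, h6] at hr
    rw [hr, max4_eq (by linarith) (by linarith) (by linarith) (by linarith) (Or.inl rfl)]
    ring
  have h11 : a (n+11) = -P*δ + Q*δ := by
    have hr := hrec (n+7) (by omega)
    simp only [show n+7+4 = n+11 from by omega, show n+7+3 = n+10 from by omega, show n+7+2 = n+9 from by omega, show n+7+1 = n+8 from by omega] at hr
    rw [h10, h9, h8, h7] at hr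
    rw [hr, max4_eq (by linarith) (by linarith) (by linarith) (by linarith) (Or.inr (Or.inl rfl))]
    ring
  have h12 : a (n+12) = -P*δ + K*δ + e + f := by
    have hr := hrec (n+8) (by omega)
    simp only [show n+8+4 = n+12 from by omega, show n+8+3 = n+11 from by omega, show n+8+2 = n+10 from by omega, show n+8+1 = n+9 from by omega] at hr
    rw [h11, h10, h9, h8] at hr
    rw [hr, max4_eq (by linarith) (by linarith) (by linarith) (by linarith) (Or.inl rfl)]
    ring
  have h13 : a (n+13) = f := by
    have hr := hrec (n+9) (by omega)
    simp only [show n+9+4 = n+13 from by omega, show n+9+3 = n+12 from by omega, show n+9+2 = n+11 from by omega, show n+9+1 = n+10 from by omega] at hr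
    rw [h12, h11, h10, h9] at hr
    rw [hr, max4_eq (by linarith) (by linarith) (by linarith) (by linarith) (Or.inr (Or.inl rfl))]
    ring
  have h14 : a (n+14) = P*δ + f := by
    have hr := hrec (n+10) (by omega)
    simp only [show n+10+4 = n+14 from by omega, show n+10+3 = n+13 from by omega, show n+10+2 = n+12 from by omega, show n+10+1 = n+11 from by omega] at hr
    rw [h13, h12, h11, h10] at hr
    rw [hr, max4_eq (by linarith) (by linarith) (by linarith) (by linarith) (Or.inr (Or.inr (Or.inl rfl)))]
    ring
  exact ⟨h11, h12, h13, h14⟩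

private lemma L23 (a : ℕ → ℝ) (P Q K δ e f : ℝ)
    (hrec : ∀ n ≥ 1, a (n + 4) = max (max (max (a (n + 3)) (a (n + 2))) (a (n + 1))) 0 - a n)
    (he0 : 0 ≤ e) (heP : e ≤ P*δ) (hf0 : 0 ≤ f) (hfQ : f ≤ Q*δ - 2*(P*δ))
    (hPd : δ ≤ P*δ) (hQd : 2*(P*δ) + δ ≤ Q*δ)
    (hg1 : e ≤ K*δ) (hg2 : K*δ ≤ P*δ + e)
    (n : ℕ) (hn : 1 ≤ n)
    (h0 : a (n) = -P*δ + Q*δ)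
    (h1 : a (n+1) = f)
    (h2 : a (n+2) = K*δ - e + f)
    (h3 : a (n+3) = P*δ + f)
    : a (n+11) = -P*δ + Q*δ ∧ a (n+12) = f ∧ a (n+13) = P*δ + f ∧ a (n+14) = P*δ - K*δ + e + f := by
  have h4 : a (n+4) = 2 * P*δ - Q*δ + f := by
    have hr := hrec n hn
    rw [h3, h2, h1, h0] at hr
    rw [hr, max4_eq (by linarith) (by linarith) (by linarith) (by linarith) (Or.inl rfl)]
    ring
  have h5 : a (n+5) = P*δ := by
    have hr := hrec (n+1) (by omega)
    simp only [show n+1+4 = n+5 from by omega, show n+1+3 = n+4 from by omega, show n+1+2 = n+3 from by omega, show n+1+1 = n+2 from by omega] at hr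
    rw [h4, h3, h2, h1] at hr
    rw [hr, max4_eq (by linarith) (by linarith) (by linarith) (by linarith) (Or.inr (Or.inl rfl))]
    ring
  have h6 : a (n+6) = P*δ - K*δ + e := by
    have hr := hrec (n+2) (by omega)
    simp only [show n+2+4 = n+6 from by omega, show n+2+3 = n+5 from by omega, show n+2+2 = n+4 from by omega, show n+2+1 = n+3 from by omega] at hr
    rw [h5, h4, h3, h2] at hr
    rw [hr, max4_eq (by linarith) (by linarith) (by linarith) (by linarith) (Or.inr (Or.inr (Or.inl rfl)))]
    ring
  have h7 : a (n+7) = -f := by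
    have hr := hrec (n+3) (by omega)
    simp only [show n+3+4 = n+7 from by omega, show n+3+3 = n+6 from by omega, show n+3+2 = n+5 from by omega, show n+3+1 = n+4 from by omega] at hr
    rw [h6, h5, h4, h3] at hr
    rw [hr, max4_eq (by linarith) (by linarith) (by linarith) (by linarith) (Or.inr (Or.inl rfl))]
    ring
  have h8 : a (n+8) = -P*δ + Q*δ - f := by
    have hr := hrec (n+4) (by omega)
    simp only [show n+4+4 = n+8 from by omega, show n+4+3 = n+7 from by omega, show n+4+2 = n+6 from by omega, show n+4+1 = n+5 from by omega] at hr
    rw [h7, h6, h5, h4] at hr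
    rw [hr, max4_eq (by linarith) (by linarith) (by linarith) (by linarith) (Or.inr (Or.inr (Or.inl rfl)))]
    ring
  have h9 : a (n+9) = -2 * P*δ + Q*δ - f := by
    have hr := hrec (n+5) (by omega)
    simp only [show n+5+4 = n+9 from by omega, show n+5+3 = n+8 from by omega, show n+5+2 = n+7 from by omega, show n+5+1 = n+6 from by omega] at hr
    rw [h8, h7, h6, h5] at hr
    rw [hr, max4_eq (by linarith) (by linarith) (by linarith) (by linarith) (Or.inl rfl)]
    ring
  have h10 : a (n+10) = -2 * P*δ + Q*δ + K*δ - e - f := by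
    have hr := hrec (n+6) (by omega)
    simp only [show n+6+4 = n+10 from by omega, show n+6+3 = n+9 from by omega, show n+6+2 = n+8 from by omega, show n+6+1 = n+7 from by omega] at hr
    rw [h9, h8, h7, h6] at hr
    rw [hr, max4_eq (by linarith) (by linarith) (by linarith) (by linarith) (Or.inr (Or.inl rfl))]
    ring
  have h11 : a (n+11) = -P*δ + Q*δ := by
    have hr := hrec (n+7) (by omega)
    simp only [show n+7+4 = n+11 from by omega, show n+7+3 = n+10 from by omega, show n+7+2 = n+9 from by omega, show n+7+1 = n+8 from by omega] at hr
    rw [h10, h9, h8, h7] at hr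
    rw [hr, max4_eq (by linarith) (by linarith) (by linarith) (by linarith) (Or.inr (Or.inr (Or.inl rfl)))]
    ring
  have h12 : a (n+12) = f := by
    have hr := hrec (n+8) (by omega)
    simp only [show n+8+4 = n+12 from by omega, show n+8+3 = n+11 from by omega, show n+8+2 = n+10 from by omega, show n+8+1 = n+9 from by omega] at hr
    rw [h11, h10, h9, h8] at hr
    rw [hr, max4_eq (by linarith) (by linarith) (by linarith) (by linarith) (Or.inl rfl)]
    ring
  have h13 : a (n+13) = P*δ + f := by
    have hr := hrec (n+9) (by omega)
    simp only [show n+9+4 = n+13 from by omega, show n+9+3 = n+12 from by omega, show n+9+2 = n+11 from by omega, show n+9+1 = n+10 from by omega] at hr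
    rw [h12, h11, h10, h9] at hr
    rw [hr, max4_eq (by linarith) (by linarith) (by linarith) (by linarith) (Or.inr (Or.inl rfl))]
    ring
  have h14 : a (n+14) = P*δ - K*δ + e + f := by
    have hr := hrec (n+10) (by omega)
    simp only [show n+10+4 = n+14 from by omega, show n+10+3 = n+13 from by omega, show n+10+2 = n+12 from by omega, show n+10+1 = n+11 from by omega] at hr
    rw [h13, h12, h11, h10] at hr
    rw [hr, max4_eq (by linarith) (by linarith) (by linarith) (by linarith) (Or.inr (Or.inr (Or.inl rfl)))]
    ring
  exact ⟨h11, h12, h13, h14⟩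

private lemma L31 (a : ℕ → ℝ) (P Q K δ e f : ℝ)
    (hrec : ∀ n ≥ 1, a (n + 4) = max (max (max (a (n + 3)) (a (n + 2))) (a (n + 1))) 0 - a n)
    (he0 : 0 ≤ e) (heP : e ≤ P*δ) (hf0 : 0 ≤ f) (hfQ : f ≤ Q*δ - 2*(P*δ))
    (hPd : δ ≤ P*δ) (hQd : 2*(P*δ) + δ ≤ Q*δ)
    (hg1 : 0 ≤ K*δ + e + f) (hg2 : e + f ≤ P*δ - K*δ)
    (n : ℕ) (hn : 1 ≤ n)
    (h0 : a (n) = -P*δ + Q*δ)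
    (h1 : a (n+1) = f)
    (h2 : a (n+2) = P*δ + f)
    (h3 : a (n+3) = K*δ + e + f)
    : a (n+10) = -P*δ + Q*δ ∧ a (n+11) = -2 * P*δ + Q*δ + K*δ + e + f ∧ a (n+12) = f ∧ a (n+13) = P*δ + f := by
  have h4 : a (n+4) = 2 * P*δ - Q*δ + f := by
    have hr := hrec n hn
    rw [h3, h2, h1, h0] at hr
    rw [hr, max4_eq (by linarith) (by linarith) (by linarith) (by linarith) (Or.inr (Or.inl rfl))]
    ring
  have h5 : a (n+5) = P*δ := by
    have hr := hrec (n+1) (by omega)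
    simp only [show n+1+4 = n+5 from by omega, show n+1+3 = n+4 from by omega, show n+1+2 = n+3 from by omega, show n+1+1 = n+2 from by omega] at hr
    rw [h4, h3, h2, h1] at hr
    rw [hr, max4_eq (by linarith) (by linarith) (by linarith) (by linarith) (Or.inr (Or.inr (Or.inl rfl)))]
    ring
  have h6 : a (n+6) = -f := by
    have hr := hrec (n+2) (by omega)
    simp only [show n+2+4 = n+6 from by omega, show n+2+3 = n+5 from by omega, show n+2+2 = n+4 from by omega, show n+2+1 = n+3 from by omega] at hr
    rw [h5, h4, h3, h2] at hr
    rw [hr, max4_eq (by linarith) (by linarith) (by linarith) (by linarith) (Or.inl rfl)]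
    ring
  have h7 : a (n+7) = P*δ - K*δ - e - f := by
    have hr := hrec (n+3) (by omega)
    simp only [show n+3+4 = n+7 from by omega, show n+3+3 = n+6 from by omega, show n+3+2 = n+5 from by omega, show n+3+1 = n+4 from by omega] at hr
    rw [h6, h5, h4, h3] at hr
    rw [hr, max4_eq (by linarith) (by linarith) (by linarith) (by linarith) (Or.inr (Or.inl rfl))]
    ring
  have h8 : a (n+8) = -P*δ + Q*δ - f := by
    have hr := hrec (n+4) (by omega)
    simp only [show n+4+4 = n+8 from by omega, show n+4+3 = n+7 from by omega, show n+4+2 = n+6 from by omega, show n+4+1 = n+5 from by omega] at hr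
    rw [h7, h6, h5, h4] at hr
    rw [hr, max4_eq (by linarith) (by linarith) (by linarith) (by linarith) (Or.inr (Or.inr (Or.inl rfl)))]
    ring
  have h9 : a (n+9) = -2 * P*δ + Q*δ - f := by
    have hr := hrec (n+5) (by omega)
    simp only [show n+5+4 = n+9 from by omega, show n+5+3 = n+8 from by omega, show n+5+2 = n+7 from by omega, show n+5+1 = n+6 from by omega] at hr
    rw [h8, h7, h6, h5] at hr
    rw [hr, max4_eq (by linarith) (by linarith) (by linarith) (by linarith) (Or.inl rfl)]
    ring
  have h10 : a (n+10) = -P*δ + Q*δ := by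
    have hr := hrec (n+6) (by omega)
    simp only [show n+6+4 = n+10 from by omega, show n+6+3 = n+9 from by omega, show n+6+2 = n+8 from by omega, show n+6+1 = n+7 from by omega] at hr
    rw [h9, h8, h7, h6] at hr
    rw [hr, max4_eq (by linarith) (by linarith) (by linarith) (by linarith) (Or.inr (Or.inl rfl))]
    ring
  have h11 : a (n+11) = -2 * P*δ + Q*δ + K*δ + e + f := by
    have hr := hrec (n+7) (by omega)
    simp only [show n+7+4 = n+11 from by omega, show n+7+3 = n+10 from by omega, show n+7+2 = n+9 from by omega, show n+7+1 = n+8 from by omega] at hr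
    rw [h10, h9, h8, h7] at hr
    rw [hr, max4_eq (by linarith) (by linarith) (by linarith) (by linarith) (Or.inl rfl)]
    ring
  have h12 : a (n+12) = f := by
    have hr := hrec (n+8) (by omega)
    simp only [show n+8+4 = n+12 from by omega, show n+8+3 = n+11 from by omega, show n+8+2 = n+10 from by omega, show n+8+1 = n+9 from by omega] at hr
    rw [h11, h10, h9, h8] at hr
    rw [hr, max4_eq (by linarith) (by linarith) (by linarith) (by linarith) (Or.inr (Or.inl rfl))]
    ring
  have h13 : a (n+13) = P*δ + f := by
    have hr := hrec (n+9) (by omega)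
    simp only [show n+9+4 = n+13 from by omega, show n+9+3 = n+12 from by omega, show n+9+2 = n+11 from by omega, show n+9+1 = n+10 from by omega] at hr
    rw [h12, h11, h10, h9] at hr
    rw [hr, max4_eq (by linarith) (by linarith) (by linarith) (by linarith) (Or.inr (Or.inr (Or.inl rfl)))]
    ring
  exact ⟨h10, h11, h12, h13⟩

private lemma L33 (a : ℕ → ℝ) (P Q K δ e f : ℝ)
    (hrec : ∀ n ≥ 1, a (n + 4) = max (max (max (a (n + 3)) (a (n + 2))) (a (n + 1))) 0 - a n)
    (he0 : 0 ≤ e) (heP : e ≤ P*δ) (hf0 : 0 ≤ f) (hfQ : f ≤ Q*δ - 2*(P*δ))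
    (hPd : δ ≤ P*δ) (hQd : 2*(P*δ) + δ ≤ Q*δ)
    (hg1 : P*δ - K*δ ≤ e + f) (hg2 : K*δ + e ≤ P*δ)
    (n : ℕ) (hn : 1 ≤ n)
    (h0 : a (n) = -P*δ + Q*δ)
    (h1 : a (n+1) = f)
    (h2 : a (n+2) = P*δ + f)
    (h3 : a (n+3) = K*δ + e + f)
    : a (n+11) = -P*δ + Q*δ ∧ a (n+12) = f ∧ a (n+13) = P*δ + f ∧ a (n+14) = -P*δ + K*δ + e + f := by
  have h4 : a (n+4) = 2 * P*δ - Q*δ + f := by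
    have hr := hrec n hn
    rw [h3, h2, h1, h0] at hr
    rw [hr, max4_eq (by linarith) (by linarith) (by linarith) (by linarith) (Or.inr (Or.inl rfl))]
    ring
  have h5 : a (n+5) = P*δ := by
    have hr := hrec (n+1) (by omega)
    simp only [show n+1+4 = n+5 from by omega, show n+1+3 = n+4 from by omega, show n+1+2 = n+3 from by omega, show n+1+1 = n+2 from by omega] at hr
    rw [h4, h3, h2, h1] at hr
    rw [hr, max4_eq (by linarith) (by linarith) (by linarith) (by linarith) (Or.inr (Or.inr (Or.inl rfl)))]
    ring
  have h6 : a (n+6) = -P*δ + K*δ + e := by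
    have hr := hrec (n+2) (by omega)
    simp only [show n+2+4 = n+6 from by omega, show n+2+3 = n+5 from by omega, show n+2+2 = n+4 from by omega, show n+2+1 = n+3 from by omega] at hr
    rw [h5, h4, h3, h2] at hr
    rw [hr, max4_eq (by linarith) (by linarith) (by linarith) (by linarith) (Or.inr (Or.inr (Or.inl rfl)))]
    ring
  have h7 : a (n+7) = P*δ - K*δ - e - f := by
    have hr := hrec (n+3) (by omega)
    simp only [show n+3+4 = n+7 from by omega, show n+3+3 = n+6 from by omega, show n+3+2 = n+5 from by omega, show n+3+1 = n+4 from by omega] at hr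
    rw [h6, h5, h4, h3] at hr
    rw [hr, max4_eq (by linarith) (by linarith) (by linarith) (by linarith) (Or.inr (Or.inl rfl))]
    ring
  have h8 : a (n+8) = -P*δ + Q*δ - f := by
    have hr := hrec (n+4) (by omega)
    simp only [show n+4+4 = n+8 from by omega, show n+4+3 = n+7 from by omega, show n+4+2 = n+6 from by omega, show n+4+1 = n+5 from by omega] at hr
    rw [h7, h6, h5, h4] at hr
    rw [hr, max4_eq (by linarith) (by linarith) (by linarith) (by linarith) (Or.inr (Or.inr (Or.inl rfl)))]
    ring
  have h9 : a (n+9) = -2 * P*δ + Q*δ - f := by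
    have hr := hrec (n+5) (by omega)
    simp only [show n+5+4 = n+9 from by omega, show n+5+3 = n+8 from by omega, show n+5+2 = n+7 from by omega, show n+5+1 = n+6 from by omega] at hr
    rw [h8, h7, h6, h5] at hr
    rw [hr, max4_eq (by linarith) (by linarith) (by linarith) (by linarith) (Or.inl rfl)]
    ring
  have h10 : a (n+10) = Q*δ - K*δ - e - f := by
    have hr := hrec (n+6) (by omega)
    simp only [show n+6+4 = n+10 from by omega, show n+6+3 = n+9 from by omega, show n+6+2 = n+8 from by omega, show n+6+1 = n+7 from by omega] at hr
    rw [h9, h8, h7, h6] at hr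
    rw [hr, max4_eq (by linarith) (by linarith) (by linarith) (by linarith) (Or.inr (Or.inl rfl))]
    ring
  have h11 : a (n+11) = -P*δ + Q*δ := by
    have hr := hrec (n+7) (by omega)
    simp only [show n+7+4 = n+11 from by omega, show n+7+3 = n+10 from by omega, show n+7+2 = n+9 from by omega, show n+7+1 = n+8 from by omega] at hr
    rw [h10, h9, h8, h7] at hr
    rw [hr, max4_eq (by linarith) (by linarith) (by linarith) (by linarith) (Or.inl rfl)]
    ring
  have h12 : a (n+12) = f := by
    have hr := hrec (n+8) (by omega)
    simp only [show n+8+4 = n+12 from by omega, show n+8+3 = n+11 from by omega, show n+8+2 = n+10 from by omega, show n+8+1 = n+9 from by omega] at hr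
    rw [h11, h10, h9, h8] at hr
    rw [hr, max4_eq (by linarith) (by linarith) (by linarith) (by linarith) (Or.inl rfl)]
    ring
  have h13 : a (n+13) = P*δ + f := by
    have hr := hrec (n+9) (by omega)
    simp only [show n+9+4 = n+13 from by omega, show n+9+3 = n+12 from by omega, show n+9+2 = n+11 from by omega, show n+9+1 = n+10 from by omega] at hr
    rw [h12, h11, h10, h9] at hr
    rw [hr, max4_eq (by linarith) (by linarith) (by linarith) (by linarith) (Or.inr (Or.inl rfl))]
    ring
  have h14 : a (n+14) = -P*δ + K*δ + e + f := by
    have hr := hrec (n+10) (by omega)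
    simp only [show n+10+4 = n+14 from by omega, show n+10+3 = n+13 from by omega, show n+10+2 = n+12 from by omega, show n+10+1 = n+11 from by omega] at hr
    rw [h13, h12, h11, h10] at hr
    rw [hr, max4_eq (by linarith) (by linarith) (by linarith) (by linarith) (Or.inr (Or.inr (Or.inl rfl)))]
    ring
  exact ⟨h11, h12, h13, h14⟩

private lemma settle3 (a : ℕ → ℝ) (P Q δ e f : ℝ)
    (hrec : ∀ n ≥ 1, a (n + 4) = max (max (max (a (n + 3)) (a (n + 2))) (a (n + 1))) 0 - a n)
    (hδ : 0 < δ)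
    (he0 : 0 ≤ e) (heP : e ≤ P*δ) (hf0 : 0 ≤ f) (hfQ : f ≤ Q*δ - 2*(P*δ))
    (hPd : δ ≤ P*δ) (hQd : 2*(P*δ) + δ ≤ Q*δ) :
    ∀ (t : ℕ) (k : ℝ) (n : ℕ), 1 ≤ n →
    a n = -P*δ + Q*δ → a (n+1) = f → a (n+2) = P*δ + f → a (n+3) = k*δ + e + f →
    k*δ + e ≤ P*δ → e + f ≤ P*δ - k*δ + t*(P*δ) →
    ∃ m : ℕ, m ≤ t ∧
      e + f ≤ P*δ - (k - m*P)*δ ∧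
      (0 < m → -((k - m*P)*δ) < e + f) ∧
      a (n+11*m) = -P*δ + Q*δ ∧ a (n+11*m+1) = f ∧ a (n+11*m+2) = P*δ + f ∧
      a (n+11*m+3) = (k - m*P)*δ + e + f := by
  intro t
  induction t with
  | zero =>
    intro k n hn s0 s1 s2 s3 hup hbd
    refine ⟨0, le_refl 0, ?_, by simp, ?_, ?_, ?_, ?_⟩
    · push_cast
      push_cast at hbd
      nlinarith
    · simpa using s0
    · simpa using s1
    · simpa using s2
    · push_cast
      rw [show n+11*0+3 = n+3 from by omega, s3]; ring
  | succ s ih =>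
    intro k n hn s0 s1 s2 s3 hup hbd
    rcases le_or_gt (e + f) (P*δ - k*δ) with hset | hloop
    · refine ⟨0, Nat.zero_le _, ?_, by simp, ?_, ?_, ?_, ?_⟩
      · push_cast; nlinarith
      · simpa using s0
      · simpa using s1
      · simpa using s2
      · push_cast
        rw [show n+11*0+3 = n+3 from by omega, s3]; ring
    · have hL := L33 a P Q k δ e f hrec he0 heP hf0 hfQ hPd hQd
        (le_of_lt hloop) hup n hn s0 s1 s2 s3
      obtain ⟨u0, u1, u2, u3⟩ := hL
      have hstep := ih (k - P) (n + 11) (by omega)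
        (by rw [u0]) (by rw [show n+11+1 = n+12 from by omega, u1])
        (by rw [show n+11+2 = n+13 from by omega, u2])
        (by rw [show n+11+3 = n+14 from by omega, u3]; ring)
        (by nlinarith) (by push_cast; push_cast at hbd; nlinarith)
      obtain ⟨m', hm', hub, hlb, v0, v1, v2, v3⟩ := hstep
      refine ⟨m' + 1, by omega, ?_, ?_, ?_, ?_, ?_, ?_⟩
      · push_cast; push_cast at hub; nlinarith
      · intro _
        rcases Nat.eq_zero_or_pos m' with h0' | h0'
        · subst h0'; push_cast; push_cast at hloop ⊢; nlinarith
        · have := hlb h0'; push_cast; push_cast at this; nlinarith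
      · rw [show n+11*(m'+1) = n+11+11*m' from by ring] ; exact v0
      · rw [show n+11*(m'+1)+1 = n+11+11*m'+1 from by ring] ; exact v1
      · rw [show n+11*(m'+1)+2 = n+11+11*m'+2 from by ring] ; exact v2
      · rw [show n+11*(m'+1)+3 = n+11+11*m'+3 from by ring, v3] ; push_cast; ring

private lemma settle1 (a : ℕ → ℝ) (P Q δ e f : ℝ)
    (hrec : ∀ n ≥ 1, a (n + 4) = max (max (max (a (n + 3)) (a (n + 2))) (a (n + 1))) 0 - a n)
    (hδ : 0 < δ)
    (he0 : 0 ≤ e) (heP : e ≤ P*δ) (hf0 : 0 ≤ f) (hfQ : f ≤ Q*δ - 2*(P*δ))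
    (hPd : δ ≤ P*δ) (hQd : 2*(P*δ) + δ ≤ Q*δ) :
    ∀ (t : ℕ) (k : ℝ) (n : ℕ), 1 ≤ n →
    a n = -P*δ + Q*δ → a (n+1) = k*δ + e + f → a (n+2) = f → a (n+3) = P*δ + f →
    k*δ + e + f ≤ Q*δ - P*δ → e ≤ P*δ - k*δ + t*(P*δ) →
    ∃ m : ℕ, m ≤ t ∧
      e ≤ P*δ - (k - m*P)*δ ∧
      (0 < m → -((k - m*P)*δ) < e) ∧
      a (n+11*m) = -P*δ + Q*δ ∧ a (n+11*m+1) = (k - m*P)*δ + e + f ∧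
      a (n+11*m+2) = f ∧ a (n+11*m+3) = P*δ + f := by
  intro t
  induction t with
  | zero =>
    intro k n hn s0 s1 s2 s3 hinv hbd
    refine ⟨0, le_refl 0, by push_cast; push_cast at hbd; nlinarith, by simp,
      by simpa using s0, ?_, by simpa using s2, by simpa using s3⟩
    push_cast
    rw [show n+11*0+1 = n+1 from by omega, s1]; ring
  | succ s ih =>
    intro k n hn s0 s1 s2 s3 hinv hbd
    rcases le_or_gt e (P*δ - k*δ) with hset | hloop
    · refine ⟨0, Nat.zero_le _, by push_cast; nlinarith, by simp,
        by simpa using s0, ?_, by simpa using s2, by simpa using s3⟩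
      push_cast
      rw [show n+11*0+1 = n+1 from by omega, s1]; ring
    · have hL := L11 a P Q k δ e f hrec he0 heP hf0 hfQ hPd hQd
        (le_of_lt hloop) hinv n hn s0 s1 s2 s3
      obtain ⟨u0, u1, u2, u3⟩ := hL
      have hstep := ih (k - P) (n + 11) (by omega)
        (by rw [u0])
        (by rw [show n+11+1 = n+12 from by omega, u1]; ring)
        (by rw [show n+11+2 = n+13 from by omega, u2])
        (by rw [show n+11+3 = n+14 from by omega, u3])
        (by nlinarith) (by push_cast; push_cast at hbd; nlinarith)
      obtain ⟨m', hm', hub, hlb, v0, v1, v2, v3⟩ := hstep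
      refine ⟨m' + 1, by omega, ?_, ?_, ?_, ?_, ?_, ?_⟩
      · push_cast; push_cast at hub; nlinarith
      · intro _
        rcases Nat.eq_zero_or_pos m' with h0' | h0'
        · subst h0'; push_cast; push_cast at hloop ⊢; nlinarith
        · have := hlb h0'; push_cast; push_cast at this; nlinarith
      · rw [show n+11*(m'+1) = n+11+11*m' from by ring]; exact v0
      · rw [show n+11*(m'+1)+1 = n+11+11*m'+1 from by ring, v1]; push_cast; ring
      · rw [show n+11*(m'+1)+2 = n+11+11*m'+2 from by ring]; exact v2
      · rw [show n+11*(m'+1)+3 = n+11+11*m'+3 from by ring]; exact v3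

private lemma roundL (a : ℕ → ℝ) (P Q δ e f : ℝ)
    (hrec : ∀ n ≥ 1, a (n + 4) = max (max (max (a (n + 3)) (a (n + 2))) (a (n + 1))) 0 - a n)
    (hδ : 0 < δ)
    (he0 : 0 ≤ e) (heP : e ≤ P*δ) (hf0 : 0 ≤ f) (hfQ : f ≤ Q*δ - 2*(P*δ))
    (hPd : δ ≤ P*δ) (hQd : 2*(P*δ) + δ ≤ Q*δ)
    (tq : ℕ) (htq : Q*δ ≤ tq*(P*δ)) :
    ∀ (k : ℝ) (n : ℕ), 1 ≤ n →
    a n = -P*δ + Q*δ → a (n+1) = k*δ + e + f → a (n+2) = f → a (n+3) = P*δ + f →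
    0 ≤ k*δ + e → e ≤ P*δ - k*δ →
    ∃ m : ℕ,
      -((k + Q - 2*P - m*P)*δ) < e ∧ e ≤ P*δ - (k + Q - 2*P - m*P)*δ ∧
      a (n+32+11*m) = -P*δ + Q*δ ∧ a (n+32+11*m+1) = (k + Q - 2*P - m*P)*δ + e + f ∧
      a (n+32+11*m+2) = f ∧ a (n+32+11*m+3) = P*δ + f := by
  intro k n hn s0 s1 s2 s3 hlo hup
  have hPd0 : 0 < P*δ := lt_of_lt_of_le hδ hPd
  have hu := L12 a P Q k δ e f hrec he0 heP hf0 hfQ hPd hQd hlo hup n hn s0 s1 s2 s3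
  obtain ⟨u0, u1, u2, u3⟩ := hu
  have hw := L23 a P Q (P - k) δ e f hrec he0 heP hf0 hfQ hPd hQd
      (by linarith) (by linarith) (n+11) (by omega)
      u0 (by rw [show n+11+1 = n+12 from by omega, u1])
      (by rw [show n+11+2 = n+13 from by omega, u2]; ring)
      (by rw [show n+11+3 = n+14 from by omega, u3])
  obtain ⟨w0, w1, w2, w3⟩ := hw
  have hs3 := settle3 a P Q δ e f hrec hδ he0 heP hf0 hfQ hPd hQd tq k (n+22) (by omega)
      (by rw [show n+11+11 = n+22 from by omega] at w0; exact w0)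
      (by rw [show n+11+12 = n+22+1 from by omega] at w1; exact w1)
      (by rw [show n+11+13 = n+22+2 from by omega] at w2; exact w2)
      (by rw [show n+11+14 = n+22+3 from by omega] at w3; rw [w3]; ring)
      (by linarith) (by linarith)
  obtain ⟨m1, hm1, hub3, hlb3, x0, x1, x2, x3⟩ := hs3
  have hlo3 : 0 ≤ (k - m1*P)*δ + e + f := by
    rcases Nat.eq_zero_or_pos m1 with h' | h'
    · subst h'; push_cast; linarith
    · have := hlb3 h'; linarith
  have hz := L31 a P Q (k - m1*P) δ e f hrec he0 heP hf0 hfQ hPd hQd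
      hlo3 hub3 (n+22+11*m1) (by omega) x0 x1 x2 x3
  obtain ⟨z0, z1, z2, z3⟩ := hz
  -- v = k - m1*P + Q - 2*P
  have hv1 : 0 < (k - m1*P + Q - 2*P)*δ + e := by
    rcases Nat.eq_zero_or_pos m1 with h' | h'
    · subst h'; push_cast; push_cast at hlo; linarith
    · have := hlb3 h'; linarith
  have hv2 : (k - m1*P + Q - 2*P)*δ + e + f ≤ Q*δ - P*δ := by linarith
  have hs1 := settle1 a P Q δ e f hrec hδ he0 heP hf0 hfQ hPd hQd tq
      (k - m1*P + Q - 2*P) (n+22+11*m1+10) (by omega)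
      z0
      (by rw [show n+22+11*m1+10+1 = n+22+11*m1+11 from by omega, z1]; ring)
      (by rw [show n+22+11*m1+10+2 = n+22+11*m1+12 from by omega]; exact z2)
      (by rw [show n+22+11*m1+10+3 = n+22+11*m1+13 from by omega]; exact z3)
      hv2 (by linarith)
  obtain ⟨m2, hm2, hub1, hlb1, y0, y1, y2, y3⟩ := hs1
  refine ⟨m1 + m2, ?_, ?_, ?_, ?_, ?_, ?_⟩
  · rcases Nat.eq_zero_or_pos m2 with h' | h'
    · subst h'; push_cast; push_cast at hv1; linarith
    · have := hlb1 h'; push_cast; push_cast at this; linarith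
  · push_cast; push_cast at hub1; linarith
  · rw [show n+32+11*(m1+m2) = n+22+11*m1+10+11*m2 from by ring]; exact y0
  · rw [show n+32+11*(m1+m2)+1 = n+22+11*m1+10+11*m2+1 from by ring, y1]; push_cast; ring
  · rw [show n+32+11*(m1+m2)+2 = n+22+11*m1+10+11*m2+2 from by ring]; exact y2
  · rw [show n+32+11*(m1+m2)+3 = n+22+11*m1+10+11*m2+3 from by ring]; exact y3

private lemma walkL (a : ℕ → ℝ) (δ e f : ℝ) (p q : ℕ)
    (hrec : ∀ n ≥ 1, a (n + 4) = max (max (max (a (n + 3)) (a (n + 2))) (a (n + 1))) 0 - a n)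
    (hp : 0 < p) (hpq : 2*p + 1 ≤ q)
    (hδ : 0 < δ)
    (he0 : 0 ≤ e) (heP : e ≤ (p:ℝ)*δ) (hf0 : 0 ≤ f) (hfQ : f ≤ (q:ℝ)*δ - 2*((p:ℝ)*δ))
    (i0 : a 1 = -(p:ℝ)*δ + (q:ℝ)*δ) (i1 : a 2 = e + f) (i2 : a 3 = f) (i3 : a 4 = (p:ℝ)*δ + f) :
    a (1+(10*p+11*q)) = -(p:ℝ)*δ + (q:ℝ)*δ ∧ a (1+(10*p+11*q)+1) = e + f ∧
    a (1+(10*p+11*q)+2) = f ∧ a (1+(10*p+11*q)+3) = (p:ℝ)*δ + f := by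
  have hp1 : (1:ℝ) ≤ (p:ℝ) := by exact_mod_cast hp
  have hq1 : (2*(p:ℝ)+1) ≤ (q:ℝ) := by exact_mod_cast hpq
  have hPd : δ ≤ (p:ℝ)*δ := by nlinarith
  have hQd : 2*((p:ℝ)*δ) + δ ≤ (q:ℝ)*δ := by nlinarith
  have htq : (q:ℝ)*δ ≤ (q:ℝ)*((p:ℝ)*δ) := by nlinarith
  have hPd0 : 0 < (p:ℝ)*δ := lt_of_lt_of_le hδ hPd
  have walk : ∀ j : ℕ, j ≤ p → ∃ ℓ : ℕ,
      0 ≤ (((j:ℤ)*((q:ℤ)-2*(p:ℤ)) - (ℓ:ℤ)*(p:ℤ) : ℤ):ℝ)*δ + e ∧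
      e ≤ (p:ℝ)*δ - (((j:ℤ)*((q:ℤ)-2*(p:ℤ)) - (ℓ:ℤ)*(p:ℤ) : ℤ):ℝ)*δ ∧
      (1 ≤ j → -((((j:ℤ)*((q:ℤ)-2*(p:ℤ)) - (ℓ:ℤ)*(p:ℤ) : ℤ):ℝ)*δ) < e) ∧
      a (1+32*j+11*ℓ) = -(p:ℝ)*δ + (q:ℝ)*δ ∧
      a (1+32*j+11*ℓ+1) = (((j:ℤ)*((q:ℤ)-2*(p:ℤ)) - (ℓ:ℤ)*(p:ℤ) : ℤ):ℝ)*δ + e + f ∧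
      a (1+32*j+11*ℓ+2) = f ∧
      a (1+32*j+11*ℓ+3) = (p:ℝ)*δ + f := by
    intro j
    induction j with
    | zero =>
      intro _
      refine ⟨0, by push_cast; linarith, by push_cast; linarith, by omega, ?_, ?_, ?_, ?_⟩
      · simpa using i0
      · push_cast; simpa using i1
      · simpa using i2
      · simpa using i3
    | succ j ih =>
      intro hj
      obtain ⟨ℓ, g1, g2, _, s0, s1, s2, s3⟩ := ih (by omega)
      have hr := roundL a (p:ℝ) (q:ℝ) δ e f hrec hδ he0 heP hf0 hfQ hPd hQd q htq
        ((((j:ℤ)*((q:ℤ)-2*(p:ℤ)) - (ℓ:ℤ)*(p:ℤ) : ℤ):ℝ)) (1+32*j+11*ℓ) (by omega)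
        s0 s1 s2 s3 g1 g2
      obtain ⟨m, r1, r2, r3, r4, r5, r6⟩ := hr
      have hcast : (((j:ℤ)*((q:ℤ)-2*(p:ℤ)) - (ℓ:ℤ)*(p:ℤ) : ℤ):ℝ) + (q:ℝ) - 2*(p:ℝ) - (m:ℝ)*(p:ℝ)
          = ((((j+1:ℕ):ℤ)*((q:ℤ)-2*(p:ℤ)) - ((ℓ+m:ℕ):ℤ)*(p:ℤ) : ℤ):ℝ) := by
        push_cast; ring
      rw [hcast] at r1 r2 r4
      refine ⟨ℓ + m, by linarith, r2, fun _ => r1, ?_, ?_, ?_, ?_⟩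
      · rw [show 1+32*(j+1)+11*(ℓ+m) = 1+32*j+11*ℓ+32+11*m from by ring]; exact r3
      · rw [show 1+32*(j+1)+11*(ℓ+m)+1 = 1+32*j+11*ℓ+32+11*m+1 from by ring]; exact r4
      · rw [show 1+32*(j+1)+11*(ℓ+m)+2 = 1+32*j+11*ℓ+32+11*m+2 from by ring]; exact r5
      · rw [show 1+32*(j+1)+11*(ℓ+m)+3 = 1+32*j+11*ℓ+32+11*m+3 from by ring]; exact r6
  obtain ⟨ℓ, g1, g2, g3, s0, s1, s2, s3⟩ := walk p (le_refl p)
  clear walk i0 i1 i2 i3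
  have g3' := g3 hp
  -- κ = p * c with c = (q-2p) - ℓ
  set K : ℤ := (p:ℤ)*((q:ℤ)-2*(p:ℤ)-(ℓ:ℤ)) with hK
  have hKeq : ((p:ℕ):ℤ)*((q:ℤ)-2*(p:ℤ)) - (ℓ:ℤ)*(p:ℤ) = K := by rw [hK]; ring
  rw [hKeq] at g1 g2 g3' s1
  set c : ℤ := (q:ℤ)-2*(p:ℤ)-(ℓ:ℤ) with hc
  have hKc : ((K:ℤ):ℝ) = (c:ℝ)*(p:ℝ) := by rw [hK, hc]; push_cast; ring
  rw [hKc] at g1 g2 g3' s1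
  have hc1 : c ≤ 1 := by
    by_contra h
    push_neg at h
    have h2 : (2:ℝ) ≤ (c:ℝ) := by exact_mod_cast h
    have h3 : 2*((p:ℝ)*δ) ≤ ((c:ℝ)*(p:ℝ))*δ := by nlinarith [hPd0]
    linarith
  have hc0 : 0 ≤ c := by
    by_contra h
    push_neg at h
    have h2' : c ≤ -1 := by omega
    have h2 : (c:ℝ) ≤ -1 := by exact_mod_cast h2'
    have h3 : ((c:ℝ)*(p:ℝ))*δ ≤ -((p:ℝ)*δ) := by nlinarith [hPd0]
    linarith
  rcases (show c = 0 ∨ c = 1 from by omega) with hc01 | hc01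
  · -- c = 0 : ℓ = q - 2p, done
    rw [hc01] at s1
    have hl : ℓ = q - 2*p := by omega
    rw [hl] at s0 s1 s2 s3
    have hidx : 1+32*p+11*(q-2*p) = 1+(10*p+11*q) := by omega
    rw [hidx] at s0 s1 s2 s3
    exact ⟨s0, by rw [s1]; push_cast; ring, s2, s3⟩
  · -- c = 1 : ℓ = q - 2p - 1, one more L11 step
    rw [hc01] at s1 g2
    have hl : ℓ = q - 2*p - 1 := by omega
    push_cast at g2
    have he0' : e ≤ 0 := by linarith
    have hee : e = 0 := le_antisymm he0' he0
    have hLL := L11 a (p:ℝ) (q:ℝ) (p:ℝ) δ e f hrec he0 heP hf0 hfQ hPd hQd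
      (by linarith) (by linarith) (1+32*p+11*ℓ) (by omega)
      s0 (by rw [s1]; push_cast; ring) s2 s3
    obtain ⟨t0, t1, t2, t3⟩ := hLL
    have hidx : ∀ i:ℕ, 1+32*p+11*ℓ+(11+i) = 1+(10*p+11*q)+i := by intro i; omega
    refine ⟨?_, ?_, ?_, ?_⟩
    · rw [show 1+(10*p+11*q) = 1+32*p+11*ℓ+11 from by omega]; exact t0
    · rw [show 1+(10*p+11*q)+1 = 1+32*p+11*ℓ+12 from by omega, t1]; ring
    · rw [show 1+(10*p+11*q)+2 = 1+32*p+11*ℓ+13 from by omega]; exact t2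
    · rw [show 1+(10*p+11*q)+3 = 1+32*p+11*ℓ+14 from by omega]; exact t3

theorem stmt_12 (p q : ℕ) (hp : 0 < p) (hq : 0 < q) (hgcd : Nat.gcd p q = 1)
    (hpq : q ≥ 2 * p + 1) (y₁ y₂ y₃ y₄ : ℝ)
    (hord : y₁ ≥ y₄ ∧ y₄ ≥ y₂ ∧ y₂ ≥ y₃ ∧ y₃ ≥ 0)
    (hval : y₁ = ((q : ℝ) - p) / p * (y₄ - y₃)) (a : ℕ → ℝ)
    (h1 : a 1 = y₁) (h2 : a 2 = y₂) (h3 : a 3 = y₃) (h4 : a 4 = y₄)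
    (hrec : ∀ n ≥ 1, a (n + 4) = max (max (max (a (n + 3)) (a (n + 2))) (a (n + 1))) 0 - a n) :
    ∀ n ≥ 1, a (n + (10 * p + 11 * q)) = a n := by
  obtain ⟨ho1, ho2, ho3, ho4⟩ := hord
  have hp0 : (0:ℝ) < (p:ℝ) := by exact_mod_cast hp
  -- the four key equalities a (1+M+i) = a (1+i)
  have key : ∀ i < 4, a (1 + (10*p+11*q) + i) = a (1 + i) := by
    rcases eq_or_lt_of_le (le_trans ho3 ho2 : y₃ ≤ y₄) with hdeg | hpos
    · -- degenerate: y₄ = y₃ hence everything is 0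
      have hy1 : y₁ = 0 := by rw [hval, ← hdeg]; ring
      have hy4 : y₄ = 0 := le_antisymm (by linarith) (by linarith)
      have hy3 : y₃ = 0 := by linarith
      have hy2 : y₂ = 0 := le_antisymm (by linarith) (by linarith)
      have hzero : ∀ n, 1 ≤ n → a n = 0 := by
        intro n
        induction n using Nat.strong_induction_on with
        | _ n ih =>
          intro hn
          match n, hn with
          | 1, _ => rw [h1, hy1]
          | 2, _ => rw [h2, hy2]
          | 3, _ => rw [h3, hy3]
          | 4, _ => rw [h4, hy4]
          | (m+5), _ =>
            have hr := hrec (m+1) (by omega)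
            rw [show m+1+4 = m+5 from by omega, show m+1+3 = m+4 from by omega,
              show m+1+2 = m+3 from by omega, show m+1+1 = m+2 from by omega] at hr
            rw [hr, ih (m+4) (by omega) (by omega), ih (m+3) (by omega) (by omega),
              ih (m+2) (by omega) (by omega), ih (m+1) (by omega) (by omega)]
            norm_num
      intro i hi
      rw [hzero _ (by omega), hzero _ (by omega)]
    · -- main case
      set δ : ℝ := (y₄ - y₃) / p with hδdef
      have hδ : 0 < δ := div_pos (by linarith) hp0
      have hPδ : (p:ℝ)*δ = y₄ - y₃ := by rw [hδdef]; field_simp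
      have hQPδ : (q:ℝ)*δ - (p:ℝ)*δ = y₁ := by
        rw [hval, hδdef]; field_simp
      have hw := walkL a δ (y₂ - y₃) y₃ p q hrec hp hpq hδ
        (by linarith) (by linarith) (by linarith) (by linarith)
        (by rw [h1]; linarith) (by rw [h2]; ring) h3 (by rw [h4]; linarith)
      obtain ⟨w0, w1, w2, w3⟩ := hw
      intro i hi
      match i, hi with
      | 0, _ => rw [show 1+(10*p+11*q)+0 = 1+(10*p+11*q) from by omega, w0, show 1+0 = 1 from rfl, h1]; linarith
      | 1, _ => rw [w1, show 1+1 = 2 from rfl, h2]; ring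
      | 2, _ => rw [w2, show 1+2 = 3 from rfl, h3]
      | 3, _ => rw [w3, show 1+3 = 4 from rfl, h4]; linarith
  -- propagate forward
  have ext : ∀ m : ℕ, a (1 + (10*p+11*q) + m) = a (1 + m) := by
    intro m
    induction m using Nat.strong_induction_on with
    | _ m ih =>
      rcases lt_or_ge m 4 with hm | hm
      · exact key m hm
      · obtain ⟨m', rfl⟩ : ∃ m', m = m' + 4 := ⟨m - 4, by omega⟩
        have hrA := hrec (1 + (10*p+11*q) + m') (by omega)
        have hrB := hrec (1 + m') (by omega)
        rw [show 1+(10*p+11*q)+m'+4 = 1+(10*p+11*q)+(m'+4) from by omega,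
          show 1+(10*p+11*q)+m'+3 = 1+(10*p+11*q)+(m'+3) from by omega,
          show 1+(10*p+11*q)+m'+2 = 1+(10*p+11*q)+(m'+2) from by omega,
          show 1+(10*p+11*q)+m'+1 = 1+(10*p+11*q)+(m'+1) from by omega] at hrA
        rw [show 1+m'+4 = 1+(m'+4) from by omega, show 1+m'+3 = 1+(m'+3) from by omega,
          show 1+m'+2 = 1+(m'+2) from by omega, show 1+m'+1 = 1+(m'+1) from by omega] at hrB
        rw [hrA, hrB, ih (m'+3) (by omega), ih (m'+2) (by omega), ih (m'+1) (by omega),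
          ih m' (by omega)]
  intro n hn
  obtain ⟨m, rfl⟩ : ∃ m, n = 1 + m := ⟨n - 1, by omega⟩
  rw [show 1+m+(10*p+11*q) = 1+(10*p+11*q)+m from by omega, ext m]
end

section
/- Let (x,y,z,w) ∈ ℝ⁴ generate a non-periodic solution of x_{n+4} = max{x_{n+3},x_{n+2},x_{n+1},0} - x_n. Then every neighbourhood of (x,y,z,w) in ℝ⁴ contains, for each N ∈ ℕ, a tuple of initial conditions generating a periodic solution of minimal period greater than N. -/
/-!
Every solution is bounded: `x (n + 11) ≤ max (x n) … (x (n + 10))` by a finite linear case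
analysis, and `x (n + 4) ≥ -x n` because the maximum in the recurrence is nonnegative. A solution
with rational initial values lives in `(1 / D) ℤ` for a common denominator `D`, so only finitely
many windows `(x n, x (n + 1), x (n + 2), x (n + 3))` occur; as the recurrence can also be run
backwards, a repeated window makes the solution periodic. Finally, solutions depend continuously
on the initial values, so the initial values admitting a period `≤ N` form a closed set; it misses
the non-periodic `c`, and a rational point of the given neighbourhood outside it does the job.
-/

/-- The solution of the recurrence with initial conditions given by a tuple. -/
noncomputable def sol (c : ℝ × ℝ × ℝ × ℝ) : ℕ → ℝ
  | 0 => 0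
  | 1 => c.1
  | 2 => c.2.1
  | 3 => c.2.2.1
  | 4 => c.2.2.2
  | (n + 5) =>
    max (max (max (sol c (n + 4)) (sol c (n + 3))) (sol c (n + 2))) 0 - sol c (n + 1)

def IsPeriodOf (p : ℕ) (a : ℕ → ℝ) : Prop := 1 ≤ p ∧ ∀ n ≥ 1, a (n + p) = a n

open Finset Function Filter Topology AddSubgroup

def MaxRec (x : ℕ → ℝ) : Prop :=
  ∀ n, x (n + 4) = max (max (max (x (n + 3)) (x (n + 2))) (x (n + 1))) 0 - x n

def window (x : ℕ → ℝ) (k : ℕ) : ℝ × ℝ × ℝ × ℝ := (x k, x (k + 1), x (k + 2), x (k + 3))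

namespace MaxRec

variable {x y : ℕ → ℝ}

lemma shift (hx : MaxRec x) (k : ℕ) : MaxRec (fun n => x (n + k)) := fun n => by
  simpa only [Nat.add_right_comm _ k] using hx (n + k)

lemma le_add_four (hx : MaxRec x) (n : ℕ) :
    x (n + 3) ≤ x (n + 4) + x n ∧ x (n + 2) ≤ x (n + 4) + x n ∧ x (n + 1) ≤ x (n + 4) + x n ∧
      0 ≤ x (n + 4) + x n := by
  simp [hx n]

lemma add_four_eq_or (hx : MaxRec x) (n : ℕ) :
    x (n + 4) + x n = x (n + 3) ∨ x (n + 4) + x n = x (n + 2) ∨ x (n + 4) + x n = x (n + 1) ∨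
      x (n + 4) + x n = 0 := by
  rw [hx n, sub_add_cancel]
  rcases max_choice (max (max (x (n + 3)) (x (n + 2))) (x (n + 1))) 0 with h | h <;> rw [h]
  · rcases max_choice (max (x (n + 3)) (x (n + 2))) (x (n + 1)) with h' | h' <;> rw [h']
    · rcases max_choice (x (n + 3)) (x (n + 2)) with h'' | h'' <;> simp [h'']
    · simp
  · simp

lemma exists_lt_eleven_le (hx : MaxRec x) : ∃ i < 11, x 11 ≤ x i := by
  by_contra! h
  simp only [Nat.forall_lt_succ_right, Nat.not_lt_zero, false_imp_iff, forall_const, true_and] at h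
  obtain ⟨⟨⟨⟨⟨⟨⟨⟨⟨⟨h0, h1⟩, h2⟩, h3⟩, h4⟩, h5⟩, h6⟩, h7⟩, h8⟩, h9⟩, h10⟩ := h
  obtain ⟨_, _, _, _⟩ := hx.le_add_four 0
  obtain ⟨_, _, _, _⟩ := hx.le_add_four 1
  obtain ⟨_, _, _, _⟩ := hx.le_add_four 2
  obtain ⟨_, _, _, _⟩ := hx.le_add_four 3
  obtain ⟨_, _, _, _⟩ := hx.le_add_four 4
  obtain ⟨_, _, _, _⟩ := hx.le_add_four 5
  obtain ⟨_, _, _, _⟩ := hx.le_add_four 6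
  obtain ⟨_, _, _, _⟩ := hx.le_add_four 7
  have e1 := hx.add_four_eq_or 1
  have e2 := hx.add_four_eq_or 2
  have e4 := hx.add_four_eq_or 4
  have e5 := hx.add_four_eq_or 5
  have e6 := hx.add_four_eq_or 6
  have e7 := hx.add_four_eq_or 7
  norm_num only at *
  -- Then `x 7 < 0`, hence `x 3 > max (x 4) (x 5) (x 6) 0`, and so on backwards: split on the
  -- argument realising each maximum until the linear constraints become inconsistent.
  rcases e7 with e7 | e7 | e7 | e7 <;> try linarith
  all_goals rcases e2 with e2 | e2 | e2 | e2 <;> try linarith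
  all_goals rcases e1 with e1 | e1 | e1 | e1 <;> try linarith
  all_goals rcases e6 with e6 | e6 | e6 | e6 <;> try linarith
  all_goals rcases e5 with e5 | e5 | e5 | e5 <;> try linarith
  all_goals rcases e4 with e4 | e4 | e4 | e4 <;> linarith

lemma le_sum_abs (hx : MaxRec x) (n : ℕ) : x n ≤ ∑ i ∈ range 11, |x i| := by
  induction n using Nat.strong_induction_on with
  | _ n ih =>
    rcases lt_or_ge n 11 with hn | hn
    · exact (le_abs_self _).trans
        (single_le_sum (fun i _ => abs_nonneg (x i)) (mem_range.2 hn))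
    · obtain ⟨m, rfl⟩ := Nat.exists_eq_add_of_le hn
      obtain ⟨i, hi, hle⟩ := (hx.shift m).exists_lt_eleven_le
      exact hle.trans (ih _ (by omega))

lemma abs_le_sum_abs (hx : MaxRec x) (n : ℕ) : |x n| ≤ ∑ i ∈ range 11, |x i| := by
  refine abs_le.2 ⟨?_, hx.le_sum_abs n⟩
  rcases lt_or_ge n 4 with hn | hn
  · exact neg_le.1 ((neg_le_abs _).trans
      (single_le_sum (fun i _ => abs_nonneg (x i)) (mem_range.2 (by omega))))
  · obtain ⟨m, rfl⟩ := Nat.exists_eq_add_of_le' hn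
    linarith [(hx.le_add_four m).2.2.2, hx.le_sum_abs m]

lemma mem_addSubgroup (hx : MaxRec x) {G : AddSubgroup ℝ} (h : ∀ i < 4, x i ∈ G) (n : ℕ) :
    x n ∈ G := by
  induction n using Nat.strong_induction_on with
  | _ n ih =>
    rcases lt_or_ge n 4 with hn | hn
    · exact h n hn
    obtain ⟨m, rfl⟩ := Nat.exists_eq_add_of_le' hn
    have hsum : x (m + 4) + x m ∈ G := by
      rcases hx.add_four_eq_or m with e | e | e | e <;> rw [e]
      exacts [ih _ (by omega), ih _ (by omega), ih _ (by omega), G.zero_mem]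
    simpa using G.sub_mem hsum (ih m (by omega))

lemma window_succ_eq_iff (hx : MaxRec x) (hy : MaxRec y) (k : ℕ) :
    window x (k + 1) = window y (k + 1) ↔ window x k = window y k := by
  simp only [window, Prod.mk.injEq, add_assoc]
  norm_num only
  rw [hx k, hy k]
  constructor
  · rintro ⟨h1, h2, h3, h4⟩
    rw [h1, h2, h3, sub_right_inj] at h4
    exact ⟨h4, h1, h2, h3⟩
  · rintro ⟨h0, h1, h2, h3⟩
    rw [h0, h1, h2, h3]
    exact ⟨rfl, rfl, rfl, rfl⟩

lemma eq_of_window_eq (hx : MaxRec x) (hy : MaxRec y) {m : ℕ} (h : window x m = window y m) :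
    x = y := by
  have key : ∀ k, window x k = window y k ↔ window x 0 = window y 0 := fun k => by
    induction k with
    | zero => rfl
    | succ k ih => exact (window_succ_eq_iff hx hy k).trans ih
  funext n
  exact congrArg Prod.fst ((key n).2 ((key m).1 h))

lemma periodic_of_window_eq (hx : MaxRec x) {m p : ℕ} (h : window x (m + p) = window x m) :
    Periodic x p :=
  congrFun (eq_of_window_eq (hx.shift p) hx (m := m) (by simpa [window, add_right_comm] using h))

lemma exists_periodic_of_finite_range (hx : MaxRec x) (h : (Set.range x).Finite) :
    ∃ p, 0 < p ∧ Periodic x p := by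
  obtain ⟨m, m', hlt, heq⟩ := (h.prod (h.prod (h.prod h))).exists_lt_map_eq_of_forall_mem
    (f := window x) fun k => by simp [window]
  obtain ⟨p, rfl⟩ := Nat.exists_eq_add_of_lt hlt
  exact ⟨p + 1, p.succ_pos, hx.periodic_of_window_eq heq.symm⟩

lemma exists_periodic_of_mem_zmultiples (hx : MaxRec x) {a : ℝ} (h : ∀ i < 4, x i ∈ zmultiples a) :
    ∃ p, 0 < p ∧ Periodic x p := by
  have hfin : (Metric.closedBall 0 (∑ i ∈ range 11, |x i|) ∩ (zmultiples a : Set ℝ)).Finite :=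
    Metric.finite_isBounded_inter_isClosed
      (isDiscrete_iff_discreteTopology.2 (inferInstanceAs (DiscreteTopology (zmultiples a))))
      Metric.isBounded_closedBall isClosed_of_discrete
  refine hx.exists_periodic_of_finite_range (hfin.subset ?_)
  rintro _ ⟨n, rfl⟩
  exact ⟨mem_closedBall_zero_iff.2 (hx.abs_le_sum_abs n), hx.mem_addSubgroup h n⟩

end MaxRec

/-- `sol c 0` is a dummy value: the solution proper is `sol c` shifted by one. -/
lemma maxRec_sol (c : ℝ × ℝ × ℝ × ℝ) : MaxRec (fun n => sol c (n + 1)) := fun _ => rfl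

lemma isPeriodOf_sol_of_periodic {c : ℝ × ℝ × ℝ × ℝ} {p : ℕ} (hp : 0 < p)
    (h : Periodic (fun n => sol c (n + 1)) p) : IsPeriodOf p (sol c) := by
  refine ⟨hp, fun n hn => ?_⟩
  obtain ⟨k, rfl⟩ := Nat.exists_eq_add_of_le' hn
  simpa only [Nat.add_right_comm k 1 p] using h k

lemma Rat.cast_mem_zmultiples_inv {q : ℚ} {D : ℕ} (hD : D ≠ 0) (h : q.den ∣ D) :
    (q : ℝ) ∈ zmultiples (D : ℝ)⁻¹ := by
  obtain ⟨e, rfl⟩ := h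
  have he : (e : ℝ) ≠ 0 := by exact_mod_cast right_ne_zero_of_mul hD
  refine mem_zmultiples_iff.2 ⟨q.num * e, ?_⟩
  rw [zsmul_eq_mul, Rat.cast_def]
  push_cast
  field_simp

lemma exists_isPeriodOf_sol_ratCast (q₁ q₂ q₃ q₄ : ℚ) :
    ∃ p, IsPeriodOf p (sol ((q₁ : ℝ), (q₂ : ℝ), (q₃ : ℝ), (q₄ : ℝ))) := by
  set D := q₁.den * q₂.den * q₃.den * q₄.den
  have hD : D ≠ 0 := by positivity
  have hinit : ∀ i < 4,
      sol ((q₁ : ℝ), (q₂ : ℝ), (q₃ : ℝ), (q₄ : ℝ)) (i + 1) ∈ zmultiples (D : ℝ)⁻¹ := by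
    intro i hi
    interval_cases i <;> refine Rat.cast_mem_zmultiples_inv hD ?_
    exacts [((dvd_mul_right _ _).mul_right _).mul_right _,
      ((dvd_mul_left _ _).mul_right _).mul_right _, (dvd_mul_left _ _).mul_right _, dvd_mul_left _ _]
  obtain ⟨p, hp, hper⟩ := (maxRec_sol _).exists_periodic_of_mem_zmultiples hinit
  exact ⟨p, isPeriodOf_sol_of_periodic hp hper⟩

lemma continuous_sol_apply (n : ℕ) : Continuous fun c : ℝ × ℝ × ℝ × ℝ => sol c n := by
  induction n using Nat.strong_induction_on with
  | _ n ih =>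
    match n with
    | 0 => exact continuous_const
    | 1 => exact continuous_fst
    | 2 => exact continuous_snd.fst
    | 3 => exact continuous_snd.snd.fst
    | 4 => exact continuous_snd.snd.snd
    | m + 5 =>
      exact ((((ih (m + 4) (by omega)).max (ih (m + 3) (by omega))).max
        (ih (m + 2) (by omega))).max continuous_const).sub (ih (m + 1) (by omega))

lemma isClosed_setOf_isPeriodOf (p : ℕ) :
    IsClosed {c : ℝ × ℝ × ℝ × ℝ | IsPeriodOf p (sol c)} := by
  simp only [IsPeriodOf, Set.ofPred_and, Set.ofPred_forall]
  exact isClosed_const.inter <| isClosed_iInter fun _ => isClosed_iInter fun _ =>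
    isClosed_eq (continuous_sol_apply _) (continuous_sol_apply _)

lemma isClosed_setOf_exists_isPeriodOf_le (N : ℕ) :
    IsClosed {c : ℝ × ℝ × ℝ × ℝ | ∃ p ≤ N, IsPeriodOf p (sol c)} := by
  convert (Set.finite_Iic N).isClosed_biUnion fun p _ => isClosed_setOf_isPeriodOf p using 1
  ext
  simp

lemma exists_ratCast_mem {c : ℝ × ℝ × ℝ × ℝ} {U : Set (ℝ × ℝ × ℝ × ℝ)} (hU : U ∈ 𝓝 c) :
    ∃ q₁ q₂ q₃ q₄ : ℚ, ((q₁ : ℝ), (q₂ : ℝ), (q₃ : ℝ), (q₄ : ℝ)) ∈ U := by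
  obtain ⟨⟨q₁, q₂, q₃, q₄⟩, hq⟩ := (Rat.denseRange_cast.prodMap (Rat.denseRange_cast.prodMap
    (Rat.denseRange_cast.prodMap Rat.denseRange_cast))).mem_nhds hU
  exact ⟨q₁, q₂, q₃, q₄, hq⟩

theorem stmt_13 (c : ℝ × ℝ × ℝ × ℝ) (hnp : ¬ ∃ p, IsPeriodOf p (sol c)) :
    ∀ V ∈ nhds c, ∀ N : ℕ, ∃ c' ∈ V,
      (∃ p, IsPeriodOf p (sol c')) ∧ ∀ p, IsPeriodOf p (sol c') → N < p := by
  intro V hV N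
  have hc : c ∈ {c' | ∃ p ≤ N, IsPeriodOf p (sol c')}ᶜ := fun ⟨p, _, hp⟩ => hnp ⟨p, hp⟩
  obtain ⟨q₁, q₂, q₃, q₄, hqV, hqN⟩ := exists_ratCast_mem <|
    inter_mem hV ((isClosed_setOf_exists_isPeriodOf_le N).isOpen_compl.mem_nhds hc)
  refine ⟨_, hqV, exists_isPeriodOf_sol_ratCast q₁ q₂ q₃ q₄, fun p hp => ?_⟩
  by_contra! hpN
  exact hqN ⟨p, hpN, hp⟩
end

section
/- For any tuple (x₁,x₂,x₃,x₄) with x₁ ≥ x₂ ≥ x₄ ≥ x₃ ≥ 0 (Case C₁), after 11 iterations of the recurrence x_{n+4} = max{x_{n+3},x_{n+2},x_{n+1},0} - x_n starting from these initial conditions, the terms (x₁₂, x₁₃, x₁₄, x₁₅) equal (x₁, x₂ + x₃ - x₄, x₃, x₄). -/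
private lemma mxA (A B C : ℝ) (h1 : B ≤ A) (h2 : C ≤ A) (h3 : 0 ≤ A) :
    max (max (max A B) C) 0 = A := by
  rw [max_eq_left h1, max_eq_left h2, max_eq_left h3]

private lemma mxB (A B C : ℝ) (h1 : A ≤ B) (h2 : C ≤ B) (h3 : 0 ≤ B) :
    max (max (max A B) C) 0 = B := by
  rw [max_eq_right h1, max_eq_left h2, max_eq_left h3]

private lemma mxC (A B C : ℝ) (h1 : max A B ≤ C) (h3 : 0 ≤ C) :
    max (max (max A B) C) 0 = C := by
  rw [max_eq_right h1, max_eq_left h3]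

theorem stmt_14 (x : ℕ → ℝ)
    (hord : x 1 ≥ x 2 ∧ x 2 ≥ x 4 ∧ x 4 ≥ x 3 ∧ x 3 ≥ 0)
    (hrec : ∀ n ≥ 1, x (n + 4) = max (max (max (x (n + 3)) (x (n + 2))) (x (n + 1))) 0 - x n) :
    x 12 = x 1 ∧ x 13 = x 2 + x 3 - x 4 ∧ x 14 = x 3 ∧ x 15 = x 4 := by
  obtain ⟨h12, h24, h43, h30⟩ := hord
  have e1 := hrec 1 (by norm_num); have e2 := hrec 2 (by norm_num)
  have e3 := hrec 3 (by norm_num); have e4 := hrec 4 (by norm_num)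
  have e5 := hrec 5 (by norm_num); have e6 := hrec 6 (by norm_num)
  have e7 := hrec 7 (by norm_num); have e8 := hrec 8 (by norm_num)
  have e9 := hrec 9 (by norm_num); have e10 := hrec 10 (by norm_num)
  have e11 := hrec 11 (by norm_num)
  norm_num at e1 e2 e3 e4 e5 e6 e7 e8 e9 e10 e11
  have h5 : x 5 = x 2 - x 1 := by
    rw [e1, mxC _ _ _ (max_le (by linarith) (by linarith)) (by linarith)]
  have h6 : x 6 = x 4 - x 2 := by
    rw [e2, mxB _ _ _ (by linarith) (by linarith) (by linarith)]
  have h7 : x 7 = x 4 - x 3 := by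
    rw [e3, mxC _ _ _ (max_le (by linarith) (by linarith)) (by linarith)]
  have h8 : x 8 = -(x 3) := by
    rw [e4, mxA _ _ _ (by linarith) (by linarith) (by linarith)]; linarith
  have h9 : x 9 = x 1 - x 2 + x 4 - x 3 := by
    rw [e5, mxB _ _ _ (by linarith) (by linarith) (by linarith)]; linarith
  have h10 : x 10 = x 1 - x 3 := by
    rw [e6, mxA _ _ _ (by linarith) (by linarith) (by linarith)]; linarith
  have h11 : x 11 = x 1 - x 4 := by
    rw [e7, mxA _ _ _ (by linarith) (by linarith) (by linarith)]; linarith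
  have h12' : x 12 = x 1 := by
    rw [e8, mxB _ _ _ (by linarith) (by linarith) (by linarith)]; linarith
  have h13 : x 13 = x 2 + x 3 - x 4 := by
    rw [e9, mxA _ _ _ (by linarith) (by linarith) (by linarith)]; linarith
  have h14 : x 14 = x 3 := by
    rw [e10, mxB _ _ _ (by linarith) (by linarith) (by linarith)]; linarith
  have h15 : x 15 = x 4 := by
    rw [e11, mxC _ _ _ (max_le (by linarith) (by linarith)) (by linarith)]; linarith
  exact ⟨h12', h13, h14, h15⟩
end

section
/- If (x₁,x₂,x₃,x₄) satisfies x₁ ≥ x₄ ≥ x₃ ≥ x₂ ≥ 0 (Case C₅), then the solution of x_{n+4} = max{x_{n+3},x_{n+2},x_{n+1},0} - x_n satisfies (x₁₂, x₁₃, x₁₄, x₁₅) = (x₁, x₂, x₄, x₂ + x₄ - x₃). -/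
/-! Under the ordering x₁ ≥ x₄ ≥ x₃ ≥ x₂ ≥ 0 every term x₅, …, x₁₅ is an explicit linear form in
x₁, …, x₄, and the ordering decides which of the three previous terms (never `0`) realizes the
maximum at each step, so the recurrence unrolls without case distinctions. -/

theorem max_max_max_zero_eq_of_le {α : Type*} [LinearOrder α] [Zero α] {a b c m : α}
    (hm : m = a ∨ m = b ∨ m = c) (ha : a ≤ m) (hb : b ≤ m) (hc : c ≤ m) (h0 : 0 ≤ m) :
    max (max (max a b) c) 0 = m := by
  refine le_antisymm (max_le (max_le (max_le ha hb) hc) h0) ?_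
  rcases hm with rfl | rfl | rfl
  · exact le_max_of_le_left (le_max_of_le_left (le_max_left _ _))
  · exact le_max_of_le_left (le_max_of_le_left (le_max_right _ _))
  · exact le_max_of_le_left (le_max_right _ _)

theorem eq_sub_of_recurrence_of_max_eq {x : ℕ → ℝ} {n : ℕ} (m : ℝ)
    (hrec : x (n + 4) = max (max (max (x (n + 3)) (x (n + 2))) (x (n + 1))) 0 - x n)
    (hm : m = x (n + 3) ∨ m = x (n + 2) ∨ m = x (n + 1))
    (h3 : x (n + 3) ≤ m) (h2 : x (n + 2) ≤ m) (h1 : x (n + 1) ≤ m) (h0 : 0 ≤ m) :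
    x (n + 4) = m - x n := by
  rw [hrec, max_max_max_zero_eq_of_le hm h3 h2 h1 h0]

theorem stmt_17 (x : ℕ → ℝ)
    (hord : x 1 ≥ x 4 ∧ x 4 ≥ x 3 ∧ x 3 ≥ x 2 ∧ x 2 ≥ 0)
    (hrec : ∀ n ≥ 1, x (n + 4) = max (max (max (x (n + 3)) (x (n + 2))) (x (n + 1))) 0 - x n) :
    x 12 = x 1 ∧ x 13 = x 2 ∧ x 14 = x 4 ∧ x 15 = x 2 + x 4 - x 3 := by
  obtain ⟨h14, h43, h32, h2⟩ := hord
  have step := fun n hn m ↦ eq_sub_of_recurrence_of_max_eq (x := x) (n := n) m (hrec n hn)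
  have x5 : x 5 = x 4 - x 1 := by
    refine (step 1 (by norm_num) (x 4) (by simp) ?_ ?_ ?_ ?_).trans ?_ <;> linarith
  have x6 : x 6 = x 4 - x 2 := by
    refine (step 2 (by norm_num) (x 4) (by simp) ?_ ?_ ?_ ?_).trans ?_ <;> linarith
  have x7 : x 7 = x 4 - x 3 := by
    refine (step 3 (by norm_num) (x 4) (by simp) ?_ ?_ ?_ ?_).trans ?_ <;> linarith
  have x8 : x 8 = -x 2 := by
    refine (step 4 (by norm_num) (x 6) (by simp) ?_ ?_ ?_ ?_).trans ?_ <;> linarith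
  have x9 : x 9 = x 1 - x 2 := by
    refine (step 5 (by norm_num) (x 6) (by simp) ?_ ?_ ?_ ?_).trans ?_ <;> linarith
  have x10 : x 10 = x 1 - x 4 := by
    refine (step 6 (by norm_num) (x 9) (by simp) ?_ ?_ ?_ ?_).trans ?_ <;> linarith
  have x11 : x 11 = x 1 - x 2 - x 4 + x 3 := by
    refine (step 7 (by norm_num) (x 9) (by simp) ?_ ?_ ?_ ?_).trans ?_ <;> linarith
  have x12 : x 12 = x 1 := by
    refine (step 8 (by norm_num) (x 9) (by simp) ?_ ?_ ?_ ?_).trans ?_ <;> linarith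
  have x13 : x 13 = x 2 := by
    refine (step 9 (by norm_num) (x 12) (by simp) ?_ ?_ ?_ ?_).trans ?_ <;> linarith
  have x14 : x 14 = x 4 := by
    refine (step 10 (by norm_num) (x 12) (by simp) ?_ ?_ ?_ ?_).trans ?_ <;> linarith
  have x15 : x 15 = x 2 + x 4 - x 3 := by
    refine (step 11 (by norm_num) (x 12) (by simp) ?_ ?_ ?_ ?_).trans ?_ <;> linarith
  exact ⟨x12, x13, x14, x15⟩
end
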